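/- arXiv:1606.08951 — 8 statements merged into one kernel-verified Lean document; each statement's English description precedes it below -/
import Mathlib

section
/- Let Q = {x ∈ ℝ^n : x ≥ 0, Ax ≤ b} be a packing polyhedron. Then the 1-row aggregation closure 1𝒜(Q) is a 2-approximation of the aggregation closure 𝒜(Q); that is, for every c ∈ ℝ^n with c ≥ 0 one has sup{cᵀx : x ∈ 1𝒜(Q)} ≤ 2·sup{cᵀx : x ∈ 𝒜(Q)}. -/
open Finset

/-- Dot product of two vectors in `ℝ^n`. -/
def dotp {n : ℕ} (c x : Fin n → ℝ) : ℝ := ∑ j, c j * x j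

/-- A point of `ℝ^n` is integral if all its coordinates are integers. -/
def isIntPt {n : ℕ} (x : Fin n → ℝ) : Prop := ∀ j, ∃ z : ℤ, x j = (z : ℝ)

/-- The value `sup { cᵀ x : x ∈ S }`, in the extended reals. -/
noncomputable def supVal {n : ℕ} (c : Fin n → ℝ) (S : Set (Fin n → ℝ)) : EReal :=
  ⨆ x ∈ S, ((dotp c x : ℝ) : EReal)

/-- The value `inf { cᵀ x : x ∈ S }`, in the extended reals. -/
noncomputable def infVal {n : ℕ} (c : Fin n → ℝ) (S : Set (Fin n → ℝ)) : EReal :=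
  ⨅ x ∈ S, ((dotp c x : ℝ) : EReal)

/-- The polyhedron `{x ≥ 0 : A x ≤ b}`. -/
def packLP {n m : ℕ} (A : Matrix (Fin m) (Fin n) ℝ) (b : Fin m → ℝ) : Set (Fin n → ℝ) :=
  {x | (∀ j, 0 ≤ x j) ∧ ∀ i, dotp (A i) x ≤ b i}

/-- Aggregation closure of a packing polyhedron. -/
def aggP {n m : ℕ} (A : Matrix (Fin m) (Fin n) ℝ) (b : Fin m → ℝ) : Set (Fin n → ℝ) :=
  ⋂ lam : {l : Fin m → ℝ // ∀ i, 0 ≤ l i},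
    convexHull ℝ {x | (∀ j, 0 ≤ x j) ∧ isIntPt x ∧
      dotp (fun j => ∑ i, lam.1 i * A i j) x ≤ ∑ i, lam.1 i * b i}

/-- 1-row aggregation closure of a packing polyhedron. -/
def oneAggP {n m : ℕ} (A : Matrix (Fin m) (Fin n) ℝ) (b : Fin m → ℝ) : Set (Fin n → ℝ) :=
  ⋂ i : Fin m, convexHull ℝ {x | (∀ j, 0 ≤ x j) ∧ isIntPt x ∧ dotp (A i) x ≤ b i}

/-- Chvátal–Gomory closure of a set `P ⊆ ℝ^n`. -/
def cgClosure {n : ℕ} (P : Set (Fin n → ℝ)) : Set (Fin n → ℝ) :=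
  {x | ∀ (c : Fin n → ℤ) (δ : ℝ),
    (∀ y ∈ P, δ ≤ ∑ j, (c j : ℝ) * y j) → ((⌈δ⌉ : ℤ) : ℝ) ≤ ∑ j, (c j : ℝ) * x j}

/-- 1-row CG closure of a packing polyhedron. -/
def oneCGP {n m : ℕ} (A : Matrix (Fin m) (Fin n) ℝ) (b : Fin m → ℝ) : Set (Fin n → ℝ) :=
  ⋂ i : Fin m, cgClosure {x | (∀ j, 0 ≤ x j) ∧ dotp (A i) x ≤ b i}

/-- Covering polyhedron with bounds `u j` on coordinates `j ∈ J` (coordinates outside `J`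
are unbounded above). -/
def coverLP {n m : ℕ} (A : Matrix (Fin m) (Fin n) ℝ) (b : Fin m → ℝ)
    (J : Finset (Fin n)) (u : Fin n → ℝ) : Set (Fin n → ℝ) :=
  {x | (∀ j, 0 ≤ x j) ∧ (∀ j ∈ J, x j ≤ u j) ∧ ∀ i, b i ≤ dotp (A i) x}

/-- Aggregation closure of a covering polyhedron with bounds. -/
def aggC {n m : ℕ} (A : Matrix (Fin m) (Fin n) ℝ) (b : Fin m → ℝ)
    (J : Finset (Fin n)) (u : Fin n → ℝ) : Set (Fin n → ℝ) :=
  ⋂ lam : {l : Fin m → ℝ // ∀ i, 0 ≤ l i},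
    convexHull ℝ {x | (∀ j, 0 ≤ x j) ∧ isIntPt x ∧ (∀ j ∈ J, x j ≤ u j) ∧
      (∑ i, lam.1 i * b i) ≤ dotp (fun j => ∑ i, lam.1 i * A i j) x}

/-- 1-row aggregation closure of a covering polyhedron with bounds. -/
def oneAggC {n m : ℕ} (A : Matrix (Fin m) (Fin n) ℝ) (b : Fin m → ℝ)
    (J : Finset (Fin n)) (u : Fin n → ℝ) : Set (Fin n → ℝ) :=
  ⋂ i : Fin m, convexHull ℝ
    {x | (∀ j, 0 ≤ x j) ∧ isIntPt x ∧ (∀ j ∈ J, x j ≤ u j) ∧ b i ≤ dotp (A i) x}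

/-- 1-row CG closure of a covering polyhedron with bounds. -/
def oneCGC {n m : ℕ} (A : Matrix (Fin m) (Fin n) ℝ) (b : Fin m → ℝ)
    (J : Finset (Fin n)) (u : Fin n → ℝ) : Set (Fin n → ℝ) :=
  ⋂ i : Fin m, cgClosure {x | (∀ j, 0 ≤ x j) ∧ (∀ j ∈ J, x j ≤ u j) ∧ b i ≤ dotp (A i) x}

lemma dotp_add {n : ℕ} (a u v : Fin n → ℝ) : dotp a (u + v) = dotp a u + dotp a v := by
  simp [dotp, mul_add, Finset.sum_add_distrib]

lemma dotp_smul {n : ℕ} (a u : Fin n → ℝ) (s : ℝ) : dotp a (s • u) = s * dotp a u := by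
  simp only [dotp, Pi.smul_apply, smul_eq_mul, Finset.mul_sum]
  exact Finset.sum_congr rfl fun j _ => by ring

lemma dotp_single {n : ℕ} (a : Fin n → ℝ) (j : Fin n) (c : ℝ) :
    dotp a (Pi.single j c) = a j * c := by
  rw [dotp, Finset.sum_eq_single j]
  · rw [Pi.single_eq_same]
  · intro k _ hk; rw [Pi.single_eq_of_ne hk, mul_zero]
  · intro h; exact absurd (Finset.mem_univ j) h

lemma convex_relax {n : ℕ} (a : Fin n → ℝ) (β : ℝ) :
    Convex ℝ {x : Fin n → ℝ | (∀ j, 0 ≤ x j) ∧ dotp a x ≤ β} := by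
  intro x hx y hy s t hs ht hst
  constructor
  · intro j
    have h1 := hx.1 j; have h2 := hy.1 j
    simp only [Pi.add_apply, Pi.smul_apply, smul_eq_mul]
    nlinarith
  · rw [dotp_add, dotp_smul, dotp_smul]
    have e1 : s * dotp a x ≤ s * β := mul_le_mul_of_nonneg_left hx.2 hs
    have e2 : t * dotp a y ≤ t * β := mul_le_mul_of_nonneg_left hy.2 ht
    have e3 : s * β + t * β = β := by linear_combination β * hst
    linarith

lemma hull_relax {n : ℕ} {a : Fin n → ℝ} {β : ℝ} {x : Fin n → ℝ}
    (hx : x ∈ convexHull ℝ {z : Fin n → ℝ | (∀ j, 0 ≤ z j) ∧ isIntPt z ∧ dotp a z ≤ β}) :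
    (∀ j, 0 ≤ x j) ∧ dotp a x ≤ β :=
  convexHull_min (t := {z : Fin n → ℝ | (∀ j, 0 ≤ z j) ∧ dotp a z ≤ β})
    (fun z hz => ⟨hz.1, hz.2.2⟩) (convex_relax a β) hx

lemma hull_coord_zero {n : ℕ} {S : Set (Fin n → ℝ)} {j : Fin n}
    (h : ∀ z ∈ S, z j = 0) {x : Fin n → ℝ} (hx : x ∈ convexHull ℝ S) : x j = 0 := by
  have hsub : convexHull ℝ S ⊆ {y : Fin n → ℝ | y j = 0} := by
    apply convexHull_min h
    intro u hu v hv s t hs ht hst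
    have hu' : u j = 0 := hu
    have hv' : v j = 0 := hv
    show (s • u + t • v) j = 0
    simp [Pi.add_apply, Pi.smul_apply, smul_eq_mul, hu', hv']
  exact hsub hx

lemma hull_translate {n : ℕ} {S : Set (Fin n → ℝ)} (v : Fin n → ℝ)
    (hS : ∀ z ∈ S, z + v ∈ S) {p : Fin n → ℝ} (hp : p ∈ convexHull ℝ S) :
    p + v ∈ convexHull ℝ S := by
  have key : convexHull ℝ S ⊆ {x : Fin n → ℝ | x + v ∈ convexHull ℝ S} := by
    apply convexHull_min
    · exact fun z hz => subset_convexHull ℝ S (hS z hz)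
    · intro u hu w hw s t hs ht hst
      simp only [Set.mem_setOf_eq] at hu hw ⊢
      have heq : s • u + t • w + v = s • (u + v) + t • (w + v) := by
        funext k
        simp only [Pi.add_apply, Pi.smul_apply, smul_eq_mul]
        linear_combination v k * hst.symm
      rw [heq]
      exact (convex_convexHull ℝ S) hu hw hs ht hst
  exact key hp

lemma half_le_floor {r : ℝ} (hr : 1 ≤ r) : r / 2 ≤ (⌊r⌋₊ : ℝ) := by
  rcases le_or_gt 2 r with h | h
  · have := Nat.sub_one_lt_floor r
    linarith
  · have h1 : (1 : ℕ) ≤ ⌊r⌋₊ := Nat.le_floor (by exact_mod_cast hr)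
    have h2 : (1:ℝ) ≤ (⌊r⌋₊ : ℝ) := by exact_mod_cast h1
    linarith

lemma ereal_le_two_mul {e : EReal} (he : 0 ≤ e) : e ≤ 2 * e := by
  induction e using EReal.rec with
  | bot => exact absurd he (by simp)
  | coe r =>
    have hr : (0:ℝ) ≤ r := EReal.coe_nonneg.mp he
    have h2 : ((r:ℝ):EReal) ≤ ((2*r:ℝ):EReal) := EReal.coe_le_coe_iff.mpr (by linarith)
    calc (r : EReal) ≤ ((2*r : ℝ) : EReal) := h2
      _ = 2 * (r : EReal) := by rw [EReal.coe_mul]; norm_cast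
  | top =>
    rw [EReal.mul_top_of_pos (by norm_num : (0:EReal) < 2)]

lemma ereal_two_mul_le {r : ℝ} {e : EReal} (h : ((r : ℝ):EReal) ≤ e) :
    ((2*r : ℝ) : EReal) ≤ 2 * e := by
  induction e using EReal.rec with
  | bot => exact absurd h (by simp)
  | coe s =>
    have : r ≤ s := EReal.coe_le_coe_iff.mp h
    calc ((2*r : ℝ) : EReal) ≤ ((2*s : ℝ) : EReal) := EReal.coe_le_coe_iff.mpr (by linarith)
      _ = 2 * (s : EReal) := by rw [EReal.coe_mul]; norm_cast
  | top =>
    rw [EReal.mul_top_of_pos (by norm_num : (0:EReal) < 2)]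
    exact le_top

lemma mem_hull_of_subone {n : ℕ} {S : Set (Fin n → ℝ)} {ι : Type} [Fintype ι]
    (p : ι → (Fin n → ℝ)) (μ : ι → ℝ) (p0 : Fin n → ℝ)
    (hp : ∀ i, p i ∈ convexHull ℝ S) (hp0 : p0 ∈ convexHull ℝ S)
    (hμ : ∀ i, 0 ≤ μ i) (hμs : ∑ i, μ i ≤ 1) :
    ((1 - ∑ i, μ i) • p0 + ∑ i, μ i • p i) ∈ convexHull ℝ S := by
  have hmem := Convex.sum_mem (convex_convexHull ℝ S)
    (t := (Finset.univ : Finset (Option ι)))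
    (w := fun o : Option ι => Option.elim o (1 - ∑ i, μ i) μ)
    (z := fun o : Option ι => Option.elim o p0 p)
    ?_ ?_ ?_
  · rw [Fintype.sum_option] at hmem
    simpa using hmem
  · intro o _
    cases o with
    | none => simpa using sub_nonneg.mpr hμs
    | some i => exact hμ i
  · rw [Fintype.sum_option]
    simp
  · intro o _
    cases o with
    | none => exact hp0
    | some i => exact hp i

lemma half_mem_hull {n : ℕ} (a : Fin n → ℝ) (β : ℝ) (ha : ∀ j, 0 ≤ a j) (hβ : 0 ≤ β)
    (y : Fin n → ℝ) (hy : ∀ j, 0 ≤ y j) (hyβ : 2 * dotp a y ≤ β)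
    (hsupp : ∀ j, 0 < y j → a j ≤ β) :
    y ∈ convexHull ℝ {x : Fin n → ℝ | (∀ j, 0 ≤ x j) ∧ isIntPt x ∧ dotp a x ≤ β} := by
  classical
  set S := {x : Fin n → ℝ | (∀ j, 0 ≤ x j) ∧ isIntPt x ∧ dotp a x ≤ β} with hSdef
  have hzeroS : (0 : Fin n → ℝ) ∈ S := by
    refine ⟨fun j => le_refl 0, fun j => ⟨0, by simp⟩, ?_⟩
    simp [dotp, hβ]
  set yp : Fin n → ℝ := fun j => if 0 < a j then y j else 0 with hypdef
  set w : Fin n → ℝ := fun j => if 0 < a j then 0 else y j with hwdef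
  have hsplit : y = yp + w := by
    funext j; by_cases h : 0 < a j <;> simp [hypdef, hwdef, h]
  have hw_nonneg : ∀ j, 0 ≤ w j := by
    intro j; by_cases h : 0 < a j <;> simp [hwdef, h, hy j]
  -- Step A : yp ∈ convexHull ℝ S
  have hstepA : yp ∈ convexHull ℝ S := by
    rcases eq_or_lt_of_le hβ with hβ0 | hβpos
    · have hyp0 : yp = 0 := by
        funext j
        by_cases h : 0 < a j
        · simp only [hypdef, if_pos h]
          by_contra hne
          have hyj : 0 < y j := lt_of_le_of_ne (hy j) (Ne.symm (by simpa using hne))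
          have hle := hsupp j hyj
          rw [← hβ0] at hle
          exact absurd (lt_of_lt_of_le h hle) (lt_irrefl 0)
        · simp [hypdef, h]
      rw [hyp0]
      exact subset_convexHull ℝ S hzeroS
    · set t : Fin n → ℕ := fun j => ⌊β / a j⌋₊ with htdef
      set μ : Fin n → ℝ := fun j => if 0 < a j then y j / (t j : ℝ) else 0 with hμdef
      have hμ_nonneg : ∀ j, 0 ≤ μ j := by
        intro j; by_cases h : 0 < a j <;>
          simp [hμdef, h, div_nonneg (hy j) (Nat.cast_nonneg (t j))]
      have htlb : ∀ j, 0 < a j → 0 < y j → (β / a j) / 2 ≤ ((t j : ℕ) : ℝ) := by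
        intro j h hyj
        exact half_le_floor ((one_le_div h).mpr (hsupp j hyj))
      have hμ_le : ∀ j, μ j ≤ 2 * (a j * y j) / β := by
        intro j
        by_cases h : 0 < a j
        · simp only [hμdef, if_pos h]
          by_cases hyj : 0 < y j
          · have h2 := htlb j h hyj
            have htpos : (0:ℝ) < (t j : ℝ) := lt_of_lt_of_le (by positivity) h2
            rw [div_le_div_iff₀ htpos hβpos]
            have h3 : β ≤ 2 * (a j * (t j : ℝ)) := by
              rw [div_div, div_le_iff₀ (by positivity : (0:ℝ) < a j * 2)] at h2
              nlinarith
            calc y j * β ≤ y j * (2 * (a j * (t j:ℝ))) :=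
                  mul_le_mul_of_nonneg_left h3 (hy j)
              _ = 2 * (a j * y j) * (t j:ℝ) := by ring
          · have hy0 : y j = 0 := le_antisymm (not_lt.mp hyj) (hy j)
            simp [hy0]
        · simp only [hμdef, if_neg h]
          exact div_nonneg (mul_nonneg (by norm_num) (mul_nonneg (ha j) (hy j))) hβpos.le
      have hμ_sum : ∑ j, μ j ≤ 1 := by
        calc ∑ j, μ j ≤ ∑ j, 2 * (a j * y j) / β :=
              Finset.sum_le_sum fun j _ => hμ_le j
          _ = (2 * dotp a y) / β := by
              rw [dotp, Finset.mul_sum, Finset.sum_div]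
          _ ≤ 1 := by rw [div_le_one hβpos]; exact hyβ
      have hpS : ∀ j, (Pi.single j ((t j : ℕ) : ℝ) : Fin n → ℝ) ∈ S := by
        intro j
        refine ⟨fun k => ?_, fun k => ?_, ?_⟩
        · rw [Pi.single_apply]
          split <;> simp
        · rw [Pi.single_apply]
          split
          · exact ⟨(t j : ℤ), by push_cast; ring⟩
          · exact ⟨0, by simp⟩
        · rw [dotp_single]
          by_cases h : 0 < a j
          · have hfl : ((t j : ℕ) : ℝ) ≤ β / a j :=
              Nat.floor_le (div_nonneg hβ (ha j))
            calc a j * ((t j : ℕ) : ℝ) ≤ a j * (β / a j) :=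
                  mul_le_mul_of_nonneg_left hfl (ha j)
              _ = β := by field_simp
          · have ha0 : a j = 0 := le_antisymm (not_lt.mp h) (ha j)
            simp [ha0, hβ]
      have hmem := mem_hull_of_subone (fun j => (Pi.single j ((t j : ℕ) : ℝ) : Fin n → ℝ))
        μ 0 (fun j => subset_convexHull ℝ S (hpS j)) (subset_convexHull ℝ S hzeroS)
        hμ_nonneg hμ_sum
      have hcomb : ((1 - ∑ j, μ j) • (0 : Fin n → ℝ)
          + ∑ j, μ j • (Pi.single j ((t j : ℕ) : ℝ) : Fin n → ℝ)) = yp := by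
        funext k
        simp only [Pi.add_apply, Pi.smul_apply, smul_eq_mul, Finset.sum_apply,
          Pi.zero_apply, mul_zero, zero_add]
        rw [Finset.sum_eq_single k]
        · rw [Pi.single_eq_same]
          by_cases h : 0 < a k
          · simp only [hμdef, hypdef, if_pos h]
            by_cases hyk : 0 < y k
            · have h2 := htlb k h hyk
              have htpos : (0:ℝ) < (t k : ℝ) := lt_of_lt_of_le (by positivity) h2
              field_simp
            · have hy0 : y k = 0 := le_antisymm (not_lt.mp hyk) (hy k)
              simp [hy0]
          · simp [hμdef, hypdef, h]
        · intro j _ hjk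
          rw [Pi.single_eq_of_ne (Ne.symm hjk), mul_zero]
        · intro h; exact absurd (Finset.mem_univ k) h
      rw [hcomb] at hmem
      exact hmem
  -- Step B : add w
  have hstepB : yp + w ∈ convexHull ℝ S := by
    set N : ℕ := ⌊∑ j, w j⌋₊ + 1 with hNdef
    have hNpos : (0:ℝ) < (N : ℝ) := by
      rw [hNdef]; push_cast; positivity
    have hwN : ∑ j, w j ≤ (N : ℝ) := by
      have hlt := Nat.lt_floor_add_one (∑ j, w j)
      rw [hNdef]; push_cast
      linarith
    set r : Fin n → (Fin n → ℝ) := fun j =>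
      if 0 < a j then yp else yp + (N:ℝ) • (Pi.single j (1:ℝ) : Fin n → ℝ) with hrdef
    have hrS : ∀ j, r j ∈ convexHull ℝ S := by
      intro j
      by_cases h : 0 < a j
      · have hrj : r j = yp := by rw [hrdef]; simp [h]
        rw [hrj]; exact hstepA
      · have hrj : r j = yp + (N:ℝ) • (Pi.single j (1:ℝ) : Fin n → ℝ) := by
          rw [hrdef]; simp [h]
        rw [hrj]
        have ha0 : a j = 0 := le_antisymm (not_lt.mp h) (ha j)
        apply hull_translate
        · intro z hz
          refine ⟨fun k => ?_, fun k => ?_, ?_⟩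
          · have h1 := hz.1 k
            have h2 : (0:ℝ) ≤ ((N:ℝ) • (Pi.single j (1:ℝ) : Fin n → ℝ)) k := by
              simp only [Pi.smul_apply, smul_eq_mul, Pi.single_apply]
              split <;> simp
            exact add_nonneg h1 h2
          · obtain ⟨z0, hz0⟩ := hz.2.1 k
            by_cases hk : k = j
            · subst hk
              refine ⟨z0 + N, ?_⟩
              simp only [Pi.add_apply, Pi.smul_apply, smul_eq_mul, Pi.single_eq_same,
                mul_one, hz0]
              push_cast; ring
            · refine ⟨z0, ?_⟩
              simp only [Pi.add_apply, Pi.smul_apply, smul_eq_mul,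
                Pi.single_eq_of_ne hk, mul_zero, add_zero, hz0]
          · rw [dotp_add, dotp_smul, dotp_single, ha0]
            simpa using hz.2.2
        · exact hstepA
    have hmem := mem_hull_of_subone r (fun j => w j / (N:ℝ)) yp hrS hstepA
      (fun j => div_nonneg (hw_nonneg j) hNpos.le)
      (by rw [← Finset.sum_div, div_le_one hNpos]; exact hwN)
    have hcomb : ((1 - ∑ j, w j / (N:ℝ)) • yp + ∑ j, (w j / (N:ℝ)) • r j) = yp + w := by
      funext k
      simp only [Pi.add_apply, Pi.smul_apply, smul_eq_mul, Finset.sum_apply]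
      have hterm : ∀ j, (w j / (N:ℝ)) * (r j k)
          = (w j / (N:ℝ)) * yp k + (if j = k then w j else 0) := by
        intro j
        by_cases h : 0 < a j
        · have hrj : r j = yp := by rw [hrdef]; simp [h]
          have hwj : w j = 0 := by simp [hwdef, h]
          simp [hrj, hwj]
        · have hrj : r j = yp + (N:ℝ) • (Pi.single j (1:ℝ) : Fin n → ℝ) := by
            rw [hrdef]; simp [h]
          rw [hrj]
          simp only [Pi.add_apply, Pi.smul_apply, smul_eq_mul, Pi.single_apply]
          by_cases hjk : k = j
          · subst hjk
            rw [if_pos rfl, if_pos rfl]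
            field_simp
          · rw [if_neg hjk, if_neg (Ne.symm hjk)]
            ring
      rw [Finset.sum_congr rfl (fun j _ => hterm j)]
      rw [Finset.sum_add_distrib]
      rw [Finset.sum_ite_eq' Finset.univ k w]
      simp only [Finset.mem_univ, if_true]
      rw [← Finset.sum_mul]
      ring
    rw [hcomb] at hmem
    exact hmem
  rw [hsplit]
  exact hstepB

/-- For a packing polyhedron `Q = {x ≥ 0 : Ax ≤ b}` (with nonnegative
rational data), the 1-row aggregation closure is a 2-approximation of the aggregation
closure. -/
theorem stmt0 {n m : ℕ} (A : Matrix (Fin m) (Fin n) ℝ) (b : Fin m → ℝ)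
    (hA : ∀ i j, 0 ≤ A i j) (hb : ∀ i, 0 ≤ b i)
    (hAq : ∀ i j, ∃ q : ℚ, A i j = (q : ℝ)) (hbq : ∀ i, ∃ q : ℚ, b i = (q : ℝ))
    (c : Fin n → ℝ) (hc : ∀ j, 0 ≤ c j) :
    supVal c (oneAggP A b) ≤ 2 * supVal c (aggP A b) := by
  rw [supVal]
  refine iSup₂_le fun x hx => ?_
  rcases Nat.eq_zero_or_pos m with hm | hm
  · -- m = 0 : no constraints
    subst hm
    set z : Fin n → ℝ := fun j => ((⌈max (x j) 0⌉ : ℤ) : ℝ) with hzdef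
    have hz0 : ∀ j, 0 ≤ z j := by
      intro j
      show (0:ℝ) ≤ ((⌈max (x j) 0⌉ : ℤ) : ℝ)
      exact_mod_cast Int.ceil_nonneg (le_max_right (x j) 0)
    have hzagg : z ∈ aggP A b := by
      rw [aggP, Set.mem_iInter]
      intro lam
      apply subset_convexHull
      refine ⟨hz0, fun j => ⟨⌈max (x j) 0⌉, rfl⟩, ?_⟩
      simp [dotp]
    have h1 : dotp c x ≤ dotp c z := by
      refine Finset.sum_le_sum fun j _ => ?_
      have : x j ≤ z j := le_trans (le_max_left (x j) 0) (by exact_mod_cast Int.le_ceil _)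
      exact mul_le_mul_of_nonneg_left this (hc j)
    have h2 : ((dotp c z : ℝ) : EReal) ≤ supVal c (aggP A b) := by
      rw [supVal]
      exact le_iSup₂ (f := fun v (_ : v ∈ aggP A b) => ((dotp c v : ℝ) : EReal)) z hzagg
    have h3 : (0 : EReal) ≤ supVal c (aggP A b) := by
      refine le_trans ?_ h2
      have : (0:ℝ) ≤ dotp c z := Finset.sum_nonneg fun j _ => mul_nonneg (hc j) (hz0 j)
      exact_mod_cast this
    calc ((dotp c x : ℝ) : EReal) ≤ ((dotp c z : ℝ) : EReal) := EReal.coe_le_coe_iff.mpr h1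
      _ ≤ supVal c (aggP A b) := h2
      _ ≤ 2 * supVal c (aggP A b) := ereal_le_two_mul h3
  · -- m > 0
    rw [oneAggP, Set.mem_iInter] at hx
    have hxRow : ∀ i, (∀ j, 0 ≤ x j) ∧ dotp (A i) x ≤ b i := fun i => hull_relax (hx i)
    have hx0 : ∀ j, 0 ≤ x j := (hxRow ⟨0, hm⟩).1
    have hsup : ∀ j, 0 < x j → ∀ i, A i j ≤ b i := by
      intro j hj i
      by_contra hcon
      push_neg at hcon
      have hzero : ∀ z ∈ {z : Fin n → ℝ | (∀ k, 0 ≤ z k) ∧ isIntPt z ∧ dotp (A i) z ≤ b i},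
          z j = 0 := by
        intro z hz
        by_contra hzj
        have hzj' : 0 < z j := lt_of_le_of_ne (hz.1 j) (Ne.symm hzj)
        obtain ⟨kz, hkz⟩ := hz.2.1 j
        have hk1 : (1:ℝ) ≤ z j := by
          rw [hkz] at hzj' ⊢
          exact_mod_cast (by exact_mod_cast hzj' : (0:ℤ) < kz)
        have h1 : A i j ≤ A i j * z j := by
          nlinarith [hA i j]
        have h2 : A i j * z j ≤ dotp (A i) z :=
          Finset.single_le_sum (f := fun k => A i k * z k)
            (fun k _ => mul_nonneg (hA i k) (hz.1 k)) (Finset.mem_univ j)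
        have h3 := hz.2.2
        linarith
      exact absurd (hull_coord_zero hzero (hx i)) (ne_of_gt hj)
    set y : Fin n → ℝ := fun j => x j / 2 with hydef
    have hymem : y ∈ aggP A b := by
      rw [aggP, Set.mem_iInter]
      intro lam
      apply half_mem_hull
      · intro j
        exact Finset.sum_nonneg fun i _ => mul_nonneg (lam.2 i) (hA i j)
      · exact Finset.sum_nonneg fun i _ => mul_nonneg (lam.2 i) (hb i)
      · intro j
        exact div_nonneg (hx0 j) (by norm_num)
      · have heq : 2 * dotp (fun j => ∑ i, lam.1 i * A i j) y
            = dotp (fun j => ∑ i, lam.1 i * A i j) x := by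
          rw [dotp, dotp, Finset.mul_sum]
          refine Finset.sum_congr rfl fun j _ => ?_
          rw [hydef]
          ring
        rw [heq]
        have hswap : dotp (fun j => ∑ i, lam.1 i * A i j) x
            = ∑ i, lam.1 i * dotp (A i) x := by
          rw [dotp]
          simp_rw [Finset.sum_mul, dotp, Finset.mul_sum]
          rw [Finset.sum_comm]
          exact Finset.sum_congr rfl fun i _ => Finset.sum_congr rfl fun j _ => by ring
        rw [hswap]
        exact Finset.sum_le_sum fun i _ =>
          mul_le_mul_of_nonneg_left (hxRow i).2 (lam.2 i)
      · intro j hj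
        have hxj : 0 < x j := by
          rw [hydef] at hj
          simp only at hj
          linarith
        exact Finset.sum_le_sum fun i _ =>
          mul_le_mul_of_nonneg_left (hsup j hxj i) (lam.2 i)
    have hle : ((dotp c y : ℝ) : EReal) ≤ supVal c (aggP A b) := by
      rw [supVal]
      exact le_iSup₂ (f := fun v (_ : v ∈ aggP A b) => ((dotp c v : ℝ) : EReal)) y hymem
    have hdc : dotp c x = 2 * dotp c y := by
      rw [dotp, dotp, Finset.mul_sum]
      refine Finset.sum_congr rfl fun j _ => ?_
      rw [hydef]
      ring
    rw [hdc]
    exact ereal_two_mul_le hle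
end

section
/- For every integer M ≥ 1, let Q_M = {x ∈ ℝ² : x ≥ 0, x₁ + M x₂ ≤ M, M x₁ + x₂ ≤ M}. Then sup{x₁ + x₂ : x ∈ 1𝒜(Q_M)} = 2M/(M+1) and sup{x₁ + x₂ : x ∈ 𝒞(Q_M)} = 1. Consequently, for every ε > 0 there exists a packing polyhedron Q and a nonnegative objective c with sup{cᵀx : x ∈ 1𝒜(Q)} ≥ (2−ε)·sup{cᵀx : x ∈ 𝒞(Q)}. -/
open Finset

lemma supVal_eq_of {n : ℕ} (c : Fin n → ℝ) (S : Set (Fin n → ℝ)) (v : ℝ)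
    (h1 : ∀ x ∈ S, dotp c x ≤ v) (h2 : ∃ x ∈ S, dotp c x = v) :
    supVal c S = (v : EReal) := by
  refine le_antisymm (iSup₂_le fun x hx => EReal.coe_le_coe_iff.2 (h1 x hx)) ?_
  obtain ⟨x, hx, he⟩ := h2
  exact le_iSup₂_of_le x hx (by rw [he])

lemma convex_half {n : ℕ} (c : Fin n → ℝ) (β : ℝ) :
    Convex ℝ {x : Fin n → ℝ | (∀ j, 0 ≤ x j) ∧ dotp c x ≤ β} := by
  intro x hx y hy a b ha hb hab
  refine ⟨fun j => ?_, ?_⟩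
  · have h1 := mul_nonneg ha (hx.1 j)
    have h2 := mul_nonneg hb (hy.1 j)
    simp only [Pi.add_apply, Pi.smul_apply, smul_eq_mul]
    linarith
  · have hkey : dotp c (a • x + b • y) = a * dotp c x + b * dotp c y := by
      simp only [dotp, Pi.add_apply, Pi.smul_apply, smul_eq_mul, Finset.mul_sum,
        ← Finset.sum_add_distrib]
      exact Finset.sum_congr rfl fun j _ => by ring
    have h1 := mul_le_mul_of_nonneg_left hx.2 ha
    have h2 := mul_le_mul_of_nonneg_left hy.2 hb
    have h3 : a * β + b * β = β := by rw [← add_mul, hab, one_mul]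
    rw [hkey]; linarith

lemma aggSup (M : ℕ) (hM : 1 ≤ M) :
    supVal (fun _ : Fin 2 => (1 : ℝ))
        (oneAggP !![(1 : ℝ), (M : ℝ); (M : ℝ), (1 : ℝ)] (fun _ => (M : ℝ)))
      = ((2 * M / (M + 1) : ℝ) : EReal) := by
  have hM1 : (1:ℝ) ≤ (M:ℝ) := by exact_mod_cast hM
  have hMpos : (0:ℝ) < (M:ℝ) + 1 := by linarith
  apply supVal_eq_of
  · intro x hx
    rw [oneAggP, Set.mem_iInter] at hx
    have key : ∀ i : Fin 2, x ∈ {y : Fin 2 → ℝ | (∀ j, 0 ≤ y j) ∧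
        dotp (!![(1 : ℝ), (M : ℝ); (M : ℝ), (1 : ℝ)] i) y ≤ (M:ℝ)} := by
      intro i
      have hsub : {y : Fin 2 → ℝ | (∀ j, 0 ≤ y j) ∧ isIntPt y ∧
          dotp (!![(1 : ℝ), (M : ℝ); (M : ℝ), (1 : ℝ)] i) y ≤ (M:ℝ)} ⊆
          {y : Fin 2 → ℝ | (∀ j, 0 ≤ y j) ∧
          dotp (!![(1 : ℝ), (M : ℝ); (M : ℝ), (1 : ℝ)] i) y ≤ (M:ℝ)} :=
        fun y hy => ⟨hy.1, hy.2.2⟩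
      exact convexHull_min hsub (convex_half _ _) (hx i)
    have k0 := (key 0).2
    have k1 := (key 1).2
    simp only [dotp, Fin.sum_univ_two, Matrix.cons_val', Matrix.cons_val_zero,
      Matrix.cons_val_one, Matrix.head_cons, Matrix.head_fin_const, Matrix.empty_val',
      Matrix.cons_val_fin_one, Matrix.of_apply] at k0 k1 ⊢
    rw [le_div_iff₀ hMpos]
    nlinarith
  · refine ⟨fun _ => (M:ℝ)/((M:ℝ)+1), ?_, ?_⟩
    · rw [oneAggP, Set.mem_iInter]
      have hab : 1/((M:ℝ)+1) + (M:ℝ)/((M:ℝ)+1) = 1 := by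
        field_simp
        ring
      have ha : (0:ℝ) ≤ 1/((M:ℝ)+1) := by positivity
      have hb : (0:ℝ) ≤ (M:ℝ)/((M:ℝ)+1) := by positivity
      intro i
      fin_cases i
      · have hp1 : (![(M:ℝ), 0]) ∈ {y : Fin 2 → ℝ | (∀ j, 0 ≤ y j) ∧ isIntPt y ∧
            dotp (!![(1 : ℝ), (M : ℝ); (M : ℝ), (1 : ℝ)] 0) y ≤ (M:ℝ)} := by
          refine ⟨fun j => ?_, fun j => ?_, ?_⟩
          · fin_cases j <;> norm_num
          · fin_cases j
            · exact ⟨M, by simp⟩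
            · exact ⟨0, by simp⟩
          · simp [dotp, Fin.sum_univ_two]
        have hp2 : (![0, (1:ℝ)]) ∈ {y : Fin 2 → ℝ | (∀ j, 0 ≤ y j) ∧ isIntPt y ∧
            dotp (!![(1 : ℝ), (M : ℝ); (M : ℝ), (1 : ℝ)] 0) y ≤ (M:ℝ)} := by
          refine ⟨fun j => ?_, fun j => ?_, ?_⟩
          · fin_cases j <;> simp
          · fin_cases j
            · exact ⟨0, by simp⟩
            · exact ⟨1, by simp⟩
          · simp [dotp, Fin.sum_univ_two]
        have hc := (convex_convexHull ℝ _) (subset_convexHull ℝ _ hp1)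
          (subset_convexHull ℝ _ hp2) ha hb hab
        have heq : (fun _ : Fin 2 => (M:ℝ)/((M:ℝ)+1)) =
            ((1/((M:ℝ)+1)) • ![(M:ℝ), 0] + ((M:ℝ)/((M:ℝ)+1)) • ![0, (1:ℝ)] : Fin 2 → ℝ) := by
          funext j
          fin_cases j <;> simp <;> field_simp
        rw [heq]
        exact hc
      · have hp1 : (![0, (M:ℝ)]) ∈ {y : Fin 2 → ℝ | (∀ j, 0 ≤ y j) ∧ isIntPt y ∧
            dotp (!![(1 : ℝ), (M : ℝ); (M : ℝ), (1 : ℝ)] 1) y ≤ (M:ℝ)} := by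
          refine ⟨fun j => ?_, fun j => ?_, ?_⟩
          · fin_cases j <;> norm_num
          · fin_cases j
            · exact ⟨0, by simp⟩
            · exact ⟨M, by simp⟩
          · simp [dotp, Fin.sum_univ_two]
        have hp2 : (![(1:ℝ), 0]) ∈ {y : Fin 2 → ℝ | (∀ j, 0 ≤ y j) ∧ isIntPt y ∧
            dotp (!![(1 : ℝ), (M : ℝ); (M : ℝ), (1 : ℝ)] 1) y ≤ (M:ℝ)} := by
          refine ⟨fun j => ?_, fun j => ?_, ?_⟩
          · fin_cases j <;> simp
          · fin_cases j
            · exact ⟨1, by simp⟩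
            · exact ⟨0, by simp⟩
          · simp [dotp, Fin.sum_univ_two]
        have hc := (convex_convexHull ℝ _) (subset_convexHull ℝ _ hp1)
          (subset_convexHull ℝ _ hp2) ha hb hab
        have heq : (fun _ : Fin 2 => (M:ℝ)/((M:ℝ)+1)) =
            ((1/((M:ℝ)+1)) • ![0, (M:ℝ)] + ((M:ℝ)/((M:ℝ)+1)) • ![(1:ℝ), 0] : Fin 2 → ℝ) := by
          funext j
          fin_cases j <;> simp <;> field_simp
        rw [heq]
        exact hc
    · simp [dotp, Fin.sum_univ_two]
      ring

lemma cgSup (M : ℕ) (hM : 1 ≤ M) :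
    supVal (fun _ : Fin 2 => (1 : ℝ))
        (cgClosure (packLP !![(1 : ℝ), (M : ℝ); (M : ℝ), (1 : ℝ)] (fun _ => (M : ℝ))))
      = ((1 : ℝ) : EReal) := by
  have hM1 : (1:ℝ) ≤ (M:ℝ) := by exact_mod_cast hM
  have hMpos : (0:ℝ) < (M:ℝ) + 1 := by linarith
  apply supVal_eq_of
  · intro x hx
    have key := hx ![-1, -1] (-(2*(M:ℝ)/((M:ℝ)+1))) ?_
    · have hceil : (⌈-(2*(M:ℝ)/((M:ℝ)+1))⌉ : ℤ) = -1 := by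
        rw [Int.ceil_eq_iff]
        constructor
        · push_cast
          have : 2*(M:ℝ)/((M:ℝ)+1) < 2 := by rw [div_lt_iff₀ hMpos]; linarith
          linarith
        · push_cast
          have : (1:ℝ) ≤ 2*(M:ℝ)/((M:ℝ)+1) := by rw [le_div_iff₀ hMpos]; linarith
          linarith
      rw [hceil] at key
      simp only [Fin.sum_univ_two, Matrix.cons_val_zero, Matrix.cons_val_one,
        Matrix.head_cons] at key
      push_cast at key
      simp only [dotp, Fin.sum_univ_two]
      linarith
    · intro y hy
      obtain ⟨hy0, hy1⟩ := hy
      have c0 := hy1 0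
      have c1 := hy1 1
      simp only [dotp, Fin.sum_univ_two, Matrix.cons_val', Matrix.cons_val_zero,
        Matrix.cons_val_one, Matrix.head_cons, Matrix.head_fin_const, Matrix.empty_val',
        Matrix.cons_val_fin_one, Matrix.of_apply] at c0 c1
      simp only [Fin.sum_univ_two, Matrix.cons_val_zero, Matrix.cons_val_one, Matrix.head_cons]
      push_cast
      have hsum : y 0 + y 1 ≤ 2*(M:ℝ)/((M:ℝ)+1) := by
        rw [le_div_iff₀ hMpos]
        nlinarith
      linarith
  · refine ⟨![1, 0], ?_, by simp [dotp, Fin.sum_univ_two]⟩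
    intro c δ h
    have h10 : (![(1:ℝ), 0]) ∈ packLP !![(1 : ℝ), (M : ℝ); (M : ℝ), (1 : ℝ)]
        (fun _ => (M : ℝ)) := by
      refine ⟨fun j => ?_, fun i => ?_⟩
      · fin_cases j <;> simp
      · fin_cases i <;> simp [dotp, Fin.sum_univ_two] <;> linarith
    have hδ := h _ h10
    have hδ' : δ ≤ ((c 0 : ℤ) : ℝ) := by
      simpa [Fin.sum_univ_two] using hδ
    calc ((⌈δ⌉ : ℤ) : ℝ) ≤ ((c 0 : ℤ) : ℝ) := by exact_mod_cast Int.ceil_le.2 hδ'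
      _ ≤ ∑ j, (c j : ℝ) * ![(1:ℝ), 0] j := by simp [Fin.sum_univ_two]

/-- For the packing polyhedron
`Q_M = {x ∈ ℝ²_+ : x₁ + M x₂ ≤ M, M x₁ + x₂ ≤ M}` with integer `M ≥ 1`, optimizing
`x₁ + x₂` over the 1-row aggregation closure gives `2M/(M+1)` while over the CG closure it
gives `1`.  Consequently, for every `ε > 0` there is a packing polyhedron `Q` and a
nonnegative objective `c` with `sup{cᵀx : x ∈ 1𝒜(Q)} ≥ (2-ε)·sup{cᵀx : x ∈ 𝒞(Q)}`. -/
theorem stmt2 :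
    (∀ M : ℕ, 1 ≤ M →
      supVal (fun _ : Fin 2 => (1 : ℝ))
          (oneAggP !![(1 : ℝ), (M : ℝ); (M : ℝ), (1 : ℝ)] (fun _ => (M : ℝ)))
        = ((2 * M / (M + 1) : ℝ) : EReal) ∧
      supVal (fun _ : Fin 2 => (1 : ℝ))
          (cgClosure (packLP !![(1 : ℝ), (M : ℝ); (M : ℝ), (1 : ℝ)] (fun _ => (M : ℝ))))
        = ((1 : ℝ) : EReal)) ∧
    (∀ ε : ℝ, 0 < ε →
      ∃ (n m : ℕ) (A : Matrix (Fin m) (Fin n) ℝ) (b : Fin m → ℝ),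
        (∀ i j, 0 ≤ A i j) ∧ (∀ i, 0 ≤ b i) ∧
        (∀ i j, ∃ q : ℚ, A i j = (q : ℝ)) ∧ (∀ i, ∃ q : ℚ, b i = (q : ℝ)) ∧
        ∃ c : Fin n → ℝ, (∀ j, 0 ≤ c j) ∧
          ((2 - ε : ℝ) : EReal) * supVal c (cgClosure (packLP A b))
            ≤ supVal c (oneAggP A b)) := by
  constructor
  · intro M hM
    exact ⟨aggSup M hM, cgSup M hM⟩
  · intro ε hε
    set M : ℕ := max 1 ⌈2/ε⌉₊ with hMdef
    have hM : 1 ≤ M := le_max_left _ _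
    refine ⟨2, 2, !![(1:ℝ), (M:ℝ); (M:ℝ), (1:ℝ)], fun _ => (M:ℝ), ?_, ?_, ?_, ?_,
      fun _ => 1, fun j => zero_le_one, ?_⟩
    · intro i j
      fin_cases i <;> fin_cases j <;> norm_num
    · intro i
      positivity
    · intro i j
      fin_cases i <;> fin_cases j
      · exact ⟨1, by norm_num⟩
      · exact ⟨(M : ℚ), by push_cast; norm_num⟩
      · exact ⟨(M : ℚ), by push_cast; norm_num⟩
      · exact ⟨1, by norm_num⟩
    · intro i
      exact ⟨(M : ℚ), by push_cast; norm_num⟩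
    · rw [cgSup M hM, aggSup M hM, ← EReal.coe_mul]
      apply EReal.coe_le_coe_iff.2
      have h2ε : 2/ε ≤ (M:ℝ) :=
        le_trans (Nat.le_ceil _) (by exact_mod_cast Nat.cast_le.2 (le_max_right 1 ⌈2/ε⌉₊))
      have hεM : 2 ≤ ε * M := by
        rw [div_le_iff₀ hε] at h2ε
        linarith
      have hMpos : (0:ℝ) < (M:ℝ) + 1 := by positivity
      rw [mul_one, le_div_iff₀ hMpos]
      have hM1 : (1:ℝ) ≤ (M:ℝ) := by exact_mod_cast hM
      nlinarith
end

section
/- For every integer k ≥ 2, let P_k = {x ∈ ℝ² : x ≥ 0, k² x₁ − (k−1) x₂ ≤ k², −k x₁ + x₂ ≤ −k+1} and let 1𝒜(P_k) = conv({x ∈ ℤ² : x ≥ 0, k² x₁ − (k−1) x₂ ≤ k²}) ∩ conv({x ∈ ℤ² : x ≥ 0, −k x₁ + x₂ ≤ −k+1}). Then sup{x₁ + x₂ : x ∈ 1𝒜(P_k)} ≥ 2 + k − 1/k while sup{x₁ + x₂ : x ∈ 𝒞(P_k)} ≤ 2. In particular, for every α ≥ 0 there exists a (non-packing, non-covering)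 rational polyhedron P and a nonnegative objective c with sup{cᵀx : x ∈ 1𝒜(P)} > α·sup{cᵀx : x ∈ 𝒞(P)}. -/
open Finset

private lemma agg_lower_aux (k : ℕ) (hk : 2 ≤ k) :
    ((2 + (k : ℝ) - 1 / (k : ℝ) : ℝ) : EReal)
      ≤ supVal (fun _ : Fin 2 => (1 : ℝ))
          (oneAggP !![(k : ℝ) ^ 2, -((k : ℝ) - 1); -(k : ℝ), (1 : ℝ)]
            ![(k : ℝ) ^ 2, -(k : ℝ) + 1]) := by
  have hkr : (2:ℝ) ≤ (k:ℝ) := by exact_mod_cast hk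
  have hk0 : (0:ℝ) < (k:ℝ) := by linarith
  have h1k : (1:ℝ)/(k:ℝ) ≤ 1 := by rw [div_le_one hk0]; linarith
  set K : ℝ := (k:ℝ) with hK
  set xstar : Fin 2 → ℝ := ![2 - 1/K, K] with hxdef
  have hmem : xstar ∈ oneAggP !![K ^ 2, -(K - 1); -K, 1] ![K ^ 2, -K + 1] := by
    rw [oneAggP, Set.mem_iInter]
    intro i
    fin_cases i
    · refine segment_subset_convexHull (x := ![1, 0]) (y := ![K, K^2]) ?_ ?_ ?_
      · refine ⟨?_, ?_, ?_⟩
        · intro j; fin_cases j <;> norm_num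
        · intro j; fin_cases j
          · exact ⟨1, by norm_num⟩
          · exact ⟨0, by norm_num⟩
        · simp [dotp, Fin.sum_univ_two]
      · refine ⟨?_, ?_, ?_⟩
        · intro j; fin_cases j <;> simp <;> positivity
        · intro j; fin_cases j
          · exact ⟨(k:ℤ), by push_cast [hK]; norm_num⟩
          · exact ⟨(k:ℤ)^2, by push_cast [hK]; norm_num⟩
        · simp only [dotp, Fin.sum_univ_two]
          simp
          nlinarith
      · refine ⟨1 - 1/K, 1/K, by rw [hK]; linarith, by positivity, by ring, ?_⟩
        funext j; fin_cases j <;> simp [hxdef] <;> field_simp <;> ring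
    · refine segment_subset_convexHull (x := ![1, 1]) (y := ![2, K+1]) ?_ ?_ ?_
      · refine ⟨?_, ?_, ?_⟩
        · intro j; fin_cases j <;> norm_num
        · intro j; fin_cases j <;> exact ⟨1, by norm_num⟩
        · simp [dotp, Fin.sum_univ_two]
      · refine ⟨?_, ?_, ?_⟩
        · intro j; fin_cases j <;> simp <;> positivity
        · intro j; fin_cases j
          · exact ⟨2, by norm_num⟩
          · exact ⟨(k:ℤ)+1, by push_cast [hK]; norm_num⟩
        · simp only [dotp, Fin.sum_univ_two]
          simp
          nlinarith
      · refine ⟨1/K, 1 - 1/K, by positivity, by rw [hK]; linarith, by ring, ?_⟩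
        funext j; fin_cases j <;> simp [hxdef] <;> field_simp <;> ring
  have hval : dotp (fun _ : Fin 2 => (1:ℝ)) xstar = 2 + K - 1/K := by
    simp [dotp, Fin.sum_univ_two, hxdef]; ring
  calc ((2 + K - 1/K : ℝ) : EReal) = ((dotp (fun _ : Fin 2 => (1:ℝ)) xstar : ℝ) : EReal) := by
        rw [hval]
    _ ≤ _ := le_iSup₂_of_le xstar hmem le_rfl

private lemma cg_pt_upper_aux (k : ℕ) (hk : 2 ≤ k) (x : Fin 2 → ℝ)
    (hx : x ∈ cgClosure (packLP !![(k : ℝ) ^ 2, -((k : ℝ) - 1); -(k : ℝ), (1 : ℝ)]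
      ![(k : ℝ) ^ 2, -(k : ℝ) + 1])) : x 0 + x 1 ≤ 2 := by
  have hkr : (2:ℝ) ≤ (k:ℝ) := by exact_mod_cast hk
  have hk0 : (0:ℝ) < (k:ℝ) := by linarith
  have hk1 : (0:ℝ) < 1/(k:ℝ) := by positivity
  have h1k : (1:ℝ)/(k:ℝ) ≤ 1 := by rw [div_le_one hk0]; linarith
  have cut1 : ((-1 : ℤ) : ℝ) ≤ ∑ j, ((![-1, 0] : Fin 2 → ℤ) j : ℝ) * x j := by
    have := hx ![-1, 0] (-(2 - 1/(k:ℝ))) ?_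
    · rwa [show ⌈-(2 - 1/(k:ℝ))⌉ = -1 by
        rw [Int.ceil_eq_iff]
        constructor <;> push_cast <;> linarith] at this
    · rintro y ⟨hy0, hyr⟩
      have h0 := hyr 0
      have h1 := hyr 1
      simp only [dotp, Fin.sum_univ_two] at h0 h1 ⊢
      simp at h0 h1 ⊢
      have key : (k:ℝ) * y 0 ≤ 2*(k:ℝ) - 1 := by nlinarith [hy0 0, hy0 1]
      have hy : y 0 ≤ (2*(k:ℝ) - 1) / (k:ℝ) := by
        rw [le_div_iff₀ hk0]; linarith [key]
      have heq : (2*(k:ℝ)-1)/(k:ℝ) = 2 - 1/(k:ℝ) := by field_simp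
      have hinv : ((k:ℝ))⁻¹ = 1/(k:ℝ) := inv_eq_one_div _
      linarith [heq ▸ hy, hinv]
  have hx0 : x 0 ≤ 1 := by
    simp [Fin.sum_univ_two] at cut1; linarith
  have cut2 : (((k:ℤ) - 2 : ℤ) : ℝ) ≤ ∑ j, ((![(k:ℤ)-1, -1] : Fin 2 → ℤ) j : ℝ) * x j := by
    have := hx ![(k:ℤ)-1, -1] ((k:ℝ) - 3 + 1/(k:ℝ)) ?_
    · rwa [show ⌈(k:ℝ) - 3 + 1/(k:ℝ)⌉ = (k:ℤ) - 2 by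
        rw [Int.ceil_eq_iff]; constructor <;> push_cast <;> linarith] at this
    · rintro y ⟨hy0, hyr⟩
      have h0 := hyr 0
      have h1 := hyr 1
      simp only [dotp, Fin.sum_univ_two] at h0 h1 ⊢
      simp at h0 h1 ⊢
      have key : (k:ℝ) * (((k:ℝ)-1) * y 0 - y 1) ≥ (k:ℝ)^2 - 3*(k:ℝ) + 1 := by
        nlinarith [hy0 0, hy0 1]
      have h2 : ((k:ℝ)^2 - 3*(k:ℝ) + 1)/(k:ℝ) = (k:ℝ) - 3 + 1/(k:ℝ) := by field_simp
      have h3 : ((k:ℝ)-1) * y 0 - y 1 ≥ ((k:ℝ)^2 - 3*(k:ℝ) + 1)/(k:ℝ) := by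
        rw [ge_iff_le, div_le_iff₀ hk0]; nlinarith [key]
      rw [h2] at h3
      have hinv : ((k:ℝ))⁻¹ = 1/(k:ℝ) := inv_eq_one_div _
      linarith [hinv]
  simp [Fin.sum_univ_two] at cut2
  push_cast at cut2
  nlinarith [cut2, hx0]

private lemma cg_upper_aux (k : ℕ) (hk : 2 ≤ k) :
    supVal (fun _ : Fin 2 => (1 : ℝ))
        (cgClosure (packLP !![(k : ℝ) ^ 2, -((k : ℝ) - 1); -(k : ℝ), (1 : ℝ)]
          ![(k : ℝ) ^ 2, -(k : ℝ) + 1]))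
      ≤ ((2 : ℝ) : EReal) := by
  refine iSup₂_le fun x hx => ?_
  have h := cg_pt_upper_aux k hk x hx
  have : dotp (fun _ : Fin 2 => (1:ℝ)) x = x 0 + x 1 := by
    simp [dotp, Fin.sum_univ_two]
  rw [this]
  exact_mod_cast EReal.coe_le_coe_iff.mpr h

private lemma cg_lower_aux (k : ℕ) (hk : 2 ≤ k) :
    ((1:ℝ) : EReal) ≤ supVal (fun _ : Fin 2 => (1 : ℝ))
      (cgClosure (packLP !![(k : ℝ) ^ 2, -((k : ℝ) - 1); -(k : ℝ), (1 : ℝ)]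
        ![(k : ℝ) ^ 2, -(k : ℝ) + 1])) := by
  have hkr : (2:ℝ) ≤ (k:ℝ) := by exact_mod_cast hk
  have hmem : (![1, 0] : Fin 2 → ℝ) ∈ cgClosure (packLP !![(k : ℝ) ^ 2, -((k : ℝ) - 1); -(k : ℝ), (1 : ℝ)]
      ![(k : ℝ) ^ 2, -(k : ℝ) + 1]) := by
    intro c δ hvalid
    have hP : (![1, 0] : Fin 2 → ℝ) ∈ packLP !![(k : ℝ) ^ 2, -((k : ℝ) - 1); -(k : ℝ), (1 : ℝ)]
        ![(k : ℝ) ^ 2, -(k : ℝ) + 1] := by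
      refine ⟨by intro j; fin_cases j <;> norm_num, ?_⟩
      intro i; fin_cases i <;> simp [dotp, Fin.sum_univ_two] <;> linarith
    have h := hvalid _ hP
    simp [Fin.sum_univ_two] at h ⊢
    exact_mod_cast Int.ceil_le.mpr (by exact_mod_cast h)
  have hval : dotp (fun _ : Fin 2 => (1:ℝ)) ![1,0] = 1 := by
    simp [dotp, Fin.sum_univ_two]
  calc ((1:ℝ) : EReal) = ((dotp (fun _ : Fin 2 => (1:ℝ)) ![1,0] : ℝ) : EReal) := by rw [hval]
    _ ≤ _ := le_iSup₂_of_le ![1,0] hmem le_rfl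

/-- For the (non-packing) polyhedron
`P_k = {x ∈ ℝ²_+ : k² x₁ - (k-1) x₂ ≤ k², -k x₁ + x₂ ≤ -k+1}` with integer `k ≥ 2`, the
value of `x₁ + x₂` over the 1-row closure is at least `2 + k - 1/k`, while over the CG
closure it is at most `2`.  In particular, for every `α ≥ 0` there is a rational polyhedron
`P` (of the form `{x ≥ 0 : Ax ≤ b}`, data of arbitrary sign) and a nonnegative objective
with `sup{cᵀx : x ∈ 1𝒜(P)} > α · sup{cᵀx : x ∈ 𝒞(P)}`. -/
theorem stmt3 :
    (∀ k : ℕ, 2 ≤ k →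
      ((2 + (k : ℝ) - 1 / (k : ℝ) : ℝ) : EReal)
          ≤ supVal (fun _ : Fin 2 => (1 : ℝ))
              (oneAggP !![(k : ℝ) ^ 2, -((k : ℝ) - 1); -(k : ℝ), (1 : ℝ)]
                ![(k : ℝ) ^ 2, -(k : ℝ) + 1]) ∧
      supVal (fun _ : Fin 2 => (1 : ℝ))
          (cgClosure (packLP !![(k : ℝ) ^ 2, -((k : ℝ) - 1); -(k : ℝ), (1 : ℝ)]
            ![(k : ℝ) ^ 2, -(k : ℝ) + 1]))
        ≤ ((2 : ℝ) : EReal)) ∧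
    (∀ α : ℝ, 0 ≤ α →
      ∃ (n m : ℕ) (A : Matrix (Fin m) (Fin n) ℝ) (b : Fin m → ℝ),
        (∀ i j, ∃ q : ℚ, A i j = (q : ℝ)) ∧ (∀ i, ∃ q : ℚ, b i = (q : ℝ)) ∧
        ∃ c : Fin n → ℝ, (∀ j, 0 ≤ c j) ∧
          ((α : ℝ) : EReal) * supVal c (cgClosure (packLP A b))
            < supVal c (oneAggP A b)) := by
  constructor
  · intro k hk
    exact ⟨agg_lower_aux k hk, cg_upper_aux k hk⟩
  · intro α hα
    set k : ℕ := 2 * ⌈α⌉₊ + 2 with hkdef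
    have hk : 2 ≤ k := by omega
    have hkr : (2:ℝ) ≤ (k:ℝ) := by exact_mod_cast hk
    have hk0 : (0:ℝ) < (k:ℝ) := by linarith
    have hka : 2 * α ≤ (k:ℝ) := by
      have h1 : α ≤ (⌈α⌉₊ : ℝ) := Nat.le_ceil α
      have : (k:ℝ) = 2 * (⌈α⌉₊:ℝ) + 2 := by push_cast [hkdef]; ring
      linarith
    refine ⟨2, 2, !![(k : ℝ) ^ 2, -((k : ℝ) - 1); -(k : ℝ), (1 : ℝ)],
      ![(k : ℝ) ^ 2, -(k : ℝ) + 1], ?_, ?_, fun _ => (1:ℝ), fun _ => zero_le_one, ?_⟩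
    · intro i j
      fin_cases i <;> fin_cases j
      · exact ⟨(k:ℚ)^2, by push_cast; norm_num⟩
      · exact ⟨-((k:ℚ)-1), by push_cast; norm_num⟩
      · exact ⟨-(k:ℚ), by push_cast; norm_num⟩
      · exact ⟨1, by norm_num⟩
    · intro i
      fin_cases i
      · exact ⟨(k:ℚ)^2, by push_cast; norm_num⟩
      · exact ⟨-(k:ℚ)+1, by push_cast; norm_num⟩
    · -- strict inequality
      set s := supVal (fun _ : Fin 2 => (1:ℝ))
        (cgClosure (packLP !![(k : ℝ) ^ 2, -((k : ℝ) - 1); -(k : ℝ), (1 : ℝ)]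
          ![(k : ℝ) ^ 2, -(k : ℝ) + 1])) with hs
      have hs2 : s ≤ ((2:ℝ) : EReal) := cg_upper_aux k hk
      have hs1 : ((1:ℝ) : EReal) ≤ s := cg_lower_aux k hk
      have hnt : s ≠ ⊤ := (lt_of_le_of_lt hs2 (EReal.coe_lt_top 2)).ne
      have hnb : s ≠ ⊥ := (lt_of_lt_of_le (EReal.bot_lt_coe 1) hs1).ne'
      have hcoe : ((s.toReal : ℝ) : EReal) = s := EReal.coe_toReal hnt hnb
      have hr2 : s.toReal ≤ 2 := by
        rw [← EReal.coe_le_coe_iff]; rw [hcoe]; exact hs2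
      have hmul : ((α : ℝ) : EReal) * s = ((α * s.toReal : ℝ) : EReal) := by
        rw [EReal.coe_mul, hcoe]
      rw [hmul]
      have h1k : (1:ℝ)/(k:ℝ) ≤ 1 := by rw [div_le_one hk0]; linarith
      have hlt : α * s.toReal < 2 + (k:ℝ) - 1/(k:ℝ) := by
        have : α * s.toReal ≤ α * 2 := by
          apply mul_le_mul_of_nonneg_left hr2 hα
        linarith
      calc ((α * s.toReal : ℝ) : EReal) < ((2 + (k:ℝ) - 1/(k:ℝ) : ℝ) : EReal) :=
            EReal.coe_lt_coe_iff.mpr hlt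
        _ ≤ _ := agg_lower_aux k hk
end

section
/- Let Q = {x ∈ ℝ^n : x ≥ 0, Ax ≤ b} be a packing polyhedron with A_{ij} ≤ b_i for all i ∈ [m] and j ∈ [n], and let k ≥ 1 be an integer. Let c ∈ ℝ^n with c ≥ 0, set z^{LP} = sup{cᵀx : x ∈ Q} and z^I = sup{cᵀx : x ∈ Q ∩ ℤ^n}, and assume 0 < z^I and z^{LP} < ∞. Then every integer ℓ ≥ 1 such that the ℓ-fold iterated k-aggregation closure 𝒜_k^ℓ(Q) equals conv(Q ∩ ℤ^n) satisfies ℓ ≥ ⌈log₂(z^{LP}/z^I) / log₂(k+1)⌉. -/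
open Finset

/-- The `k`-aggregation closure of a set `Q ⊆ ℝ^n`: the intersection, over all nonnegative
systems `D x ≤ f` of `k` inequalities valid for `Q`, of the integer hulls
`conv({x ∈ ℤ^n_+ : D x ≤ f})`. -/
def aggKP {n : ℕ} (k : ℕ) (Q : Set (Fin n → ℝ)) : Set (Fin n → ℝ) :=
  ⋂ Df : {Df : Matrix (Fin k) (Fin n) ℝ × (Fin k → ℝ) //
      (∀ i j, 0 ≤ Df.1 i j) ∧ (∀ i, 0 ≤ Df.2 i) ∧ ∀ x ∈ Q, ∀ i, dotp (Df.1 i) x ≤ Df.2 i},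
    convexHull ℝ {x | (∀ j, 0 ≤ x j) ∧ isIntPt x ∧ ∀ i, dotp (Df.1.1 i) x ≤ Df.1.2 i}

/-!
Let `D x ≤ f` be a nonnegative system of `k` inequalities valid for a set containing the unit
vectors, so that `Dᵢⱼ ≤ fᵢ`. Every `x ≥ 0` with `D x ≤ f` then satisfies
`x / (k + 1) ∈ conv {y ∈ ℤⁿ₊ : D y ≤ f}`: the coordinates of `x` on zero columns of `D` are free
directions of this integer hull; the remaining part of `x` is a convex combination of feasible
points with at most `k` nonzero coordinates, and such a point `y` is
`⌊y⌋ + ∑ⱼ fract(yⱼ) eⱼ` with total fractional mass at most `k`. Since the unit vectors survive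
every round, `Q / (k + 1)^ℓ ⊆ 𝒜_k^ℓ(Q) = conv(Q ∩ ℤⁿ)`, hence `z^LP ≤ (k + 1)^ℓ z^I`.
-/

open Matrix

section Convexity

variable {𝕜 E ι : Type*} [Field 𝕜] [LinearOrder 𝕜] [IsStrictOrderedRing 𝕜]
  [AddCommGroup E] [Module 𝕜 E]

theorem Convex.sum_mem_of_zero_mem [Fintype ι] {K : Set E} (hK : Convex 𝕜 K) (h0 : 0 ∈ K)
    {w : ι → 𝕜} {z : ι → E} (hw : ∀ i, 0 ≤ w i) (hw1 : ∑ i, w i ≤ 1) (hz : ∀ i, z i ∈ K) :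
    ∑ i, w i • z i ∈ K := by
  have h := hK.sum_mem (t := Finset.univ) (w := fun o : Option ι => o.elim (1 - ∑ i, w i) w)
    (z := fun o => o.elim 0 z) (by rintro (_ | i) _ <;> simp [hw, hw1])
    (by simp [Fintype.sum_option]) (by rintro (_ | i) _ <;> simp [h0, hz])
  simpa [Fintype.sum_option] using h

theorem add_smul_mem_convexHull_of_add_mem [FloorSemiring 𝕜] {S : Set E} {v : E}
    (hS : ∀ s ∈ S, s + v ∈ S) {p : E} (hp : p ∈ convexHull 𝕜 S) {t : 𝕜} (ht : 0 ≤ t) :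
    p + t • v ∈ convexHull 𝕜 S := by
  have hnat : ∀ s ∈ S, ∀ N : ℕ, s + N • v ∈ S := by
    intro s hs N
    induction N with
    | zero => simpa using hs
    | succ N ih => simpa [succ_nsmul, add_assoc] using hS _ ih
  have hS' : S ⊆ (fun q => q + t • v) ⁻¹' convexHull 𝕜 S := by
    intro s hs
    have h := (convex_convexHull 𝕜 S).add_smul_mem (subset_convexHull 𝕜 S (hnat s hs ⌊t⌋₊))
      (by simpa [add_assoc, succ_nsmul] using subset_convexHull 𝕜 S (hnat s hs (⌊t⌋₊ + 1)))
      ⟨sub_nonneg.2 (Nat.floor_le ht), by linarith [Nat.lt_floor_add_one t]⟩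
    rwa [add_assoc, ← Nat.cast_smul_eq_nsmul 𝕜, ← add_smul, add_sub_cancel] at h
  have hconv : Convex 𝕜 ((fun q => q + t • v) ⁻¹' convexHull 𝕜 S) := by
    simpa only [add_comm _ (t • v)] using (convex_convexHull 𝕜 S).translate_preimage_right (t • v)
  exact convexHull_min hS' hconv hp

end Convexity

theorem Matrix.exists_ne_zero_mulVec_eq_zero_of_card_lt {K ι κ : Type*} [Field K] [Fintype ι]
    [Fintype κ] (D : Matrix ι κ K) (s : Finset κ) (hs : Fintype.card ι < s.card) :
    ∃ g : κ → K, g ≠ 0 ∧ (∀ j ∉ s, g j = 0) ∧ D *ᵥ g = 0 := by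
  set ext := Function.ExtendByZero.linearMap K ((↑) : s → κ)
  have hker : LinearMap.ker (D.mulVecLin ∘ₗ ext) ≠ ⊥ :=
    LinearMap.ker_ne_bot_of_finrank_lt (by simpa using hs)
  obtain ⟨g, hg, hg0⟩ := (Submodule.ne_bot_iff _).1 hker
  refine ⟨ext g, fun h => hg0 ?_, fun j hj => ?_, hg⟩
  · ext j
    simpa [ext, Subtype.val_injective.extend_apply] using congrFun h j
  · simp only [ext, Function.ExtendByZero.linearMap_apply]
    exact Function.extend_apply' _ _ _ (by simpa using hj)

theorem Matrix.exists_neg_of_mulVec_eq_zero {ι κ : Type*} [Fintype κ] {D : Matrix ι κ ℝ}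
    (hD : ∀ i j, 0 ≤ D i j) {g : κ → ℝ} (hg : D *ᵥ g = 0) (hne : g ≠ 0)
    (hcol : ∀ j, g j ≠ 0 → ∃ i, D i j ≠ 0) : ∃ j, g j < 0 := by
  by_contra! hpos
  obtain ⟨j, hj⟩ := Function.ne_iff.1 hne
  obtain ⟨i, hi⟩ := hcol j hj
  have hterms := (Finset.sum_eq_zero_iff_of_nonneg fun j' _ => mul_nonneg (hD i j') (hpos j')).1
    (congrFun hg i)
  exact mul_ne_zero hi hj (hterms j (Finset.mem_univ j))

noncomputable def supportFinset {κ : Type*} [Fintype κ] (x : κ → ℝ) : Finset κ := {j | x j ≠ 0}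

@[simp]
theorem mem_supportFinset {κ : Type*} [Fintype κ] {x : κ → ℝ} {j : κ} :
    j ∈ supportFinset x ↔ x j ≠ 0 := by
  simp [supportFinset]

theorem supportFinset_add_smul_subset {κ : Type*} [Fintype κ] {x g : κ → ℝ}
    (hgx : ∀ j, g j ≠ 0 → x j ≠ 0) (t : ℝ) : supportFinset (x + t • g) ⊆ supportFinset x := by
  intro j hj
  simp only [mem_supportFinset, Pi.add_apply, Pi.smul_apply, smul_eq_mul] at hj ⊢
  intro hxj
  have hgj : g j = 0 := by_contra fun h => hgx j h hxj
  simp [hxj, hgj] at hj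

theorem exists_pos_card_supportFinset_add_smul_lt {κ : Type*} [Fintype κ] {x g : κ → ℝ}
    (hx : ∀ j, 0 ≤ x j) (hgx : ∀ j, g j ≠ 0 → x j ≠ 0) (hneg : ∃ j, g j < 0) :
    ∃ t > 0, (∀ j, 0 ≤ x j + t * g j) ∧
      (supportFinset (x + t • g)).card < (supportFinset x).card := by
  obtain ⟨jm, hjm, hmin⟩ := Finset.exists_min_image {j | g j < 0} (fun j => x j / -g j)
    (let ⟨j, hj⟩ := hneg; ⟨j, by simpa using hj⟩)
  have hgjm : g jm < 0 := by simpa using hjm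
  have hxjm : 0 < x jm := (hx jm).lt_of_ne' (hgx jm hgjm.ne)
  refine ⟨x jm / -g jm, div_pos hxjm (neg_pos.2 hgjm), fun j => ?_, ?_⟩
  · rcases le_or_gt 0 (g j) with hgj | hgj
    · exact add_nonneg (hx j) (mul_nonneg (div_pos hxjm (neg_pos.2 hgjm)).le hgj)
    · have h := (le_div_iff₀ (neg_pos.2 hgj)).1 (hmin j (by simpa using hgj))
      linarith
  · refine Finset.card_lt_card ⟨supportFinset_add_smul_subset hgx _, fun h => ?_⟩
    have hjm_mem := h (by simpa using hxjm.ne')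
    simp only [mem_supportFinset, Pi.add_apply, Pi.smul_apply, smul_eq_mul] at hjm_mem
    rw [div_neg, neg_mul, div_mul_cancel₀ _ hgjm.ne, add_neg_cancel] at hjm_mem
    exact hjm_mem rfl

theorem dotp_eq_dotProduct {n : ℕ} (c x : Fin n → ℝ) : dotp c x = c ⬝ᵥ x := rfl

section Packing

variable {n k : ℕ} {D : Matrix (Fin k) (Fin n) ℝ} {f : Fin k → ℝ}

theorem add_smul_mem_packLP_of_mulVec_eq_zero {x g : Fin n → ℝ} (hx : x ∈ packLP D f)
    (hg : D *ᵥ g = 0) {t : ℝ} (hnonneg : ∀ j, 0 ≤ x j + t * g j) : x + t • g ∈ packLP D f := by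
  refine ⟨hnonneg, fun i => ?_⟩
  have hgi : D i ⬝ᵥ g = 0 := congrFun hg i
  simpa [dotp_eq_dotProduct, dotProduct_add, dotProduct_smul, hgi] using hx.2 i

/-- A kernel vector of `D` supported on the support of `x` has entries of both signs, as no
column of `D` vanishes there, so `x` lies between two feasible points of smaller support. -/
theorem mem_convexHull_card_supportFinset_le (hD : ∀ i j, 0 ≤ D i j) {x : Fin n → ℝ}
    (hx : x ∈ packLP D f) (hcol : ∀ j, x j ≠ 0 → ∃ i, D i j ≠ 0) :
    x ∈ convexHull ℝ {y | y ∈ packLP D f ∧ (supportFinset y).card ≤ k} := by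
  induction hN : (supportFinset x).card using Nat.strong_induction_on generalizing x with
  | _ N ih =>
    by_cases hsmall : N ≤ k
    · exact subset_convexHull ℝ _ ⟨hx, hN ▸ hsmall⟩
    obtain ⟨g, hg0, hgs, hg⟩ := D.exists_ne_zero_mulVec_eq_zero_of_card_lt (supportFinset x)
      (by simp only [Fintype.card_fin]; omega)
    have hgx : ∀ j, g j ≠ 0 → x j ≠ 0 := fun j hj =>
      mem_supportFinset.1 (by_contra fun h => hj (hgs j h))
    have hgcol : ∀ j, g j ≠ 0 → ∃ i, D i j ≠ 0 := fun j hj => hcol j (hgx j hj)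
    have hshrunk : ∀ t : ℝ, (∀ j, 0 ≤ x j + t * g j) →
        (supportFinset (x + t • g)).card < N → x + t • g ∈ convexHull ℝ _ :=
      fun t hnonneg hlt => ih _ hlt (add_smul_mem_packLP_of_mulVec_eq_zero hx hg hnonneg)
        (fun j hj => hcol j (mem_supportFinset.1 (supportFinset_add_smul_subset hgx t
          (mem_supportFinset.2 hj)))) rfl
    obtain ⟨t, ht, hxt, hlt⟩ := exists_pos_card_supportFinset_add_smul_lt hx.1 hgx
      (exists_neg_of_mulVec_eq_zero hD hg hg0 hgcol)
    obtain ⟨s, hs, hxs, hls⟩ := exists_pos_card_supportFinset_add_smul_lt (g := -g) hx.1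
      (by simpa using hgx)
      (exists_neg_of_mulVec_eq_zero hD (by simp [mulVec_neg, hg]) (neg_ne_zero.2 hg0)
        (by simpa using hgcol))
    have hmem := (convex_convexHull ℝ _) (hshrunk t hxt (hN ▸ hlt))
      (hshrunk (-s) (by simpa using hxs) (by simpa [hN] using hls))
      (div_nonneg hs.le (by positivity) : 0 ≤ s / (t + s))
      (div_nonneg ht.le (by positivity) : 0 ≤ t / (t + s)) (by field_simp; ring)
    convert hmem using 1
    ext j
    simp only [Pi.add_apply, Pi.smul_apply, smul_eq_mul]
    field_simp
    ring

end Packing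

def packLPInt {n m : ℕ} (A : Matrix (Fin m) (Fin n) ℝ) (b : Fin m → ℝ) : Set (Fin n → ℝ) :=
  {x | x ∈ packLP A b ∧ isIntPt x}

section IntegerHull

variable {n k : ℕ} {D : Matrix (Fin k) (Fin n) ℝ} {f : Fin k → ℝ}

theorem isIntPt_single (j : Fin n) : isIntPt (Pi.single j (1 : ℝ)) := fun j' => by
  rcases eq_or_ne j' j with rfl | h
  · exact ⟨1, by simp⟩
  · exact ⟨0, by simp [h]⟩

theorem single_mem_packLPInt {j : Fin n} (hDf : ∀ i, D i j ≤ f i) :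
    Pi.single j 1 ∈ packLPInt D f := by
  refine ⟨⟨fun j' => ?_, fun i => ?_⟩, isIntPt_single j⟩
  · rcases eq_or_ne j' j with rfl | h <;> simp [*]
  · simpa [dotp_eq_dotProduct, dotProduct_single] using hDf i

theorem zero_mem_packLPInt (hf : ∀ i, 0 ≤ f i) : 0 ∈ packLPInt D f :=
  ⟨⟨fun _ => le_rfl, fun i => by simpa [dotp_eq_dotProduct] using hf i⟩, fun _ => ⟨0, by simp⟩⟩

theorem floor_mem_packLPInt (hD : ∀ i j, 0 ≤ D i j) {x : Fin n → ℝ} (hx : x ∈ packLP D f) :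
    (fun j => (⌊x j⌋ : ℝ)) ∈ packLPInt D f := by
  refine ⟨⟨fun j => ?_, fun i => ?_⟩, fun j => ⟨⌊x j⌋, rfl⟩⟩
  · exact Int.cast_nonneg_iff.2 (Int.floor_nonneg.2 (hx.1 j))
  · exact (Finset.sum_le_sum fun j _ =>
      mul_le_mul_of_nonneg_left (Int.floor_le (x j)) (hD i j)).trans (hx.2 i)

theorem add_mem_convexHull_packLPInt {r p : Fin n → ℝ} (hr : ∀ j, 0 ≤ r j)
    (hcol : ∀ j, r j ≠ 0 → ∀ i, D i j = 0) (hp : p ∈ convexHull ℝ (packLPInt D f)) :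
    p + r ∈ convexHull ℝ (packLPInt D f) := by
  have hpartial : ∀ s : Finset (Fin n), p + ∑ j ∈ s, r j • Pi.single j 1 ∈
      convexHull ℝ (packLPInt D f) := by
    intro s
    induction s using Finset.induction_on with
    | empty => simpa using hp
    | insert a s ha ih =>
      rw [Finset.sum_insert ha, add_comm (r a • _), ← add_assoc]
      rcases eq_or_ne (r a) 0 with hra | hra
      · simpa [hra] using ih
      refine add_smul_mem_convexHull_of_add_mem (fun y hy => ?_) ih (hr a)
      refine ⟨⟨fun j => ?_, fun i => ?_⟩, fun j => ?_⟩
      · rcases eq_or_ne j a with rfl | h <;> simp [*, hy.1.1 j, add_nonneg]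
      · simpa [dotp_eq_dotProduct, dotProduct_add, dotProduct_single, hcol a hra i] using hy.1.2 i
      · obtain ⟨z, hz⟩ := hy.2 j
        obtain ⟨e, he⟩ := isIntPt_single a j
        exact ⟨z + e, by simp [hz, he]⟩
  have huniv := hpartial Finset.univ
  simp only [← Pi.single_smul', smul_eq_mul, mul_one, Finset.univ_sum_single] at huniv
  exact huniv

/-- `y / (k + 1)` puts weight `1 / (k + 1)` on `⌊y⌋`, weight `fract(yⱼ) / (k + 1)` on `eⱼ`
(at most `k` of them nonzero) and the rest on `0`. -/
theorem inv_smul_mem_convexHull_packLPInt_of_card_le (hD : ∀ i j, 0 ≤ D i j)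
    (hf : ∀ i, 0 ≤ f i) (hDf : ∀ i j, D i j ≤ f i) {y : Fin n → ℝ} (hy : y ∈ packLP D f)
    (hcard : (supportFinset y).card ≤ k) :
    ((k : ℝ) + 1)⁻¹ • y ∈ convexHull ℝ (packLPInt D f) := by
  have hfract : ∑ j, Int.fract (y j) ≤ k := calc
    ∑ j, Int.fract (y j) ≤ ∑ j, if y j ≠ 0 then (1 : ℝ) else 0 :=
      Finset.sum_le_sum fun j _ => by
        split_ifs with h
        · exact (Int.fract_lt_one _).le
        · simp [not_not.1 h]
    _ = (supportFinset y).card := by rw [Finset.sum_boole]; rfl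
    _ ≤ k := by exact_mod_cast hcard
  have hk : (0 : ℝ) < k + 1 := by positivity
  have hcomb := (convex_convexHull ℝ (packLPInt D f)).sum_mem_of_zero_mem
    (subset_convexHull ℝ _ (zero_mem_packLPInt hf))
    (w := fun o : Option (Fin n) =>
      o.elim ((k : ℝ) + 1)⁻¹ fun j => ((k : ℝ) + 1)⁻¹ * Int.fract (y j))
    (z := fun o => o.elim (fun j => (⌊y j⌋ : ℝ)) fun j => Pi.single j 1)
    (by
      rintro (_ | j)
      exacts [inv_nonneg.2 hk.le, mul_nonneg (inv_nonneg.2 hk.le) (Int.fract_nonneg _)])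
    (by
      simp only [Fintype.sum_option, Option.elim, ← Finset.mul_sum]
      rw [← mul_one_add, inv_mul_le_one₀ hk]
      linarith)
    (by rintro (_ | j); exacts [subset_convexHull ℝ _ (floor_mem_packLPInt hD hy),
      subset_convexHull ℝ _ (single_mem_packLPInt (hDf · j))])
  convert hcomb using 1
  ext j
  simp [Fintype.sum_option, Finset.sum_apply, Pi.single_apply, ← mul_add]

theorem inv_smul_mem_convexHull_packLPInt (hD : ∀ i j, 0 ≤ D i j) (hf : ∀ i, 0 ≤ f i)
    (hDf : ∀ i j, D i j ≤ f i) {x : Fin n → ℝ} (hx : x ∈ packLP D f) :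
    ((k : ℝ) + 1)⁻¹ • x ∈ convexHull ℝ (packLPInt D f) := by
  classical
  set xZ : Fin n → ℝ := fun j => if ∀ i, D i j = 0 then x j else 0
  have hxZ : ∀ j, 0 ≤ xZ j := fun j => by by_cases h : ∀ i, D i j = 0 <;> simp [xZ, h, hx.1 j]
  have hDxZ : ∀ i, D i ⬝ᵥ xZ = 0 := fun i => Finset.sum_eq_zero fun j _ => by
    by_cases h : ∀ i, D i j = 0 <;> simp [xZ, h]
  have hxB : x - xZ ∈ packLP D f := by
    refine ⟨fun j => ?_, fun i => ?_⟩
    · by_cases h : ∀ i, D i j = 0 <;> simp [xZ, h, hx.1 j]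
    · simpa [dotp_eq_dotProduct, dotProduct_sub, hDxZ] using hx.2 i
  have hcolB : ∀ j, (x - xZ) j ≠ 0 → ∃ i, D i j ≠ 0 := fun j hj => by
    by_contra! h
    simp [xZ, h] at hj
  have hB : ((k : ℝ) + 1)⁻¹ • (x - xZ) ∈ convexHull ℝ (packLPInt D f) :=
    convexHull_min (fun y hy => inv_smul_mem_convexHull_packLPInt_of_card_le hD hf hDf hy.1 hy.2)
      ((convex_convexHull ℝ _).smul_preimage _) (mem_convexHull_card_supportFinset_le hD hxB hcolB)
  have hZ := add_mem_convexHull_packLPInt (r := ((k : ℝ) + 1)⁻¹ • xZ)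
    (fun j => mul_nonneg (by positivity) (hxZ j))
    (fun j hj => by by_contra! h; simp [xZ, h] at hj) hB
  rwa [← smul_add, sub_add_cancel] at hZ

end IntegerHull

section Aggregation

variable {n k : ℕ} {P : Set (Fin n → ℝ)}

theorem mem_aggKP {x : Fin n → ℝ} :
    x ∈ aggKP k P ↔ ∀ (D : Matrix (Fin k) (Fin n) ℝ) (f : Fin k → ℝ), (∀ i j, 0 ≤ D i j) →
      (∀ i, 0 ≤ f i) → (∀ y ∈ P, ∀ i, dotp (D i) y ≤ f i) →
      x ∈ convexHull ℝ (packLPInt D f) := by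
  have hset : ∀ (D : Matrix (Fin k) (Fin n) ℝ) (f : Fin k → ℝ),
      {x | (∀ j, 0 ≤ x j) ∧ isIntPt x ∧ ∀ i, dotp (D i) x ≤ f i} = packLPInt D f := by
    intro D f
    ext x
    simp only [packLPInt, packLP, Set.mem_ofPred_eq]
    tauto
  simp [aggKP, hset]

theorem entry_le_of_single_mem {D : Matrix (Fin k) (Fin n) ℝ} {f : Fin k → ℝ} {j : Fin n}
    (hval : ∀ y ∈ P, ∀ i, dotp (D i) y ≤ f i) (hP : Pi.single j 1 ∈ P) (i : Fin k) :
    D i j ≤ f i := by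
  simpa [dotp_eq_dotProduct, dotProduct_single] using hval _ hP i

theorem single_mem_aggKP {j : Fin n} (hP : Pi.single j 1 ∈ P) : Pi.single j 1 ∈ aggKP k P :=
  mem_aggKP.2 fun _ _ _ _ hval =>
    subset_convexHull ℝ _ (single_mem_packLPInt (entry_le_of_single_mem hval hP))

theorem inv_smul_mem_aggKP (hP : ∀ j, Pi.single j 1 ∈ P) {x : Fin n → ℝ} (hx : x ∈ P)
    (hx0 : ∀ j, 0 ≤ x j) : ((k : ℝ) + 1)⁻¹ • x ∈ aggKP k P :=
  mem_aggKP.2 fun _ _ hD hf hval => inv_smul_mem_convexHull_packLPInt hD hf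
    (fun _ j => entry_le_of_single_mem hval (hP j) _) ⟨hx0, hval x hx⟩

theorem inv_pow_smul_mem_iterate_aggKP (hP : ∀ j, Pi.single j 1 ∈ P) {x : Fin n → ℝ}
    (hx : x ∈ P) (hx0 : ∀ j, 0 ≤ x j) (l : ℕ) :
    (((k : ℝ) + 1) ^ l)⁻¹ • x ∈ (aggKP k)^[l] P := by
  have hsingle : ∀ l j, Pi.single j 1 ∈ (aggKP k)^[l] P := fun l j => by
    induction l with
    | zero => exact hP j
    | succ l ih => rw [Function.iterate_succ_apply']; exact single_mem_aggKP ih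
  induction l with
  | zero => simpa using hx
  | succ l ih =>
    rw [Function.iterate_succ_apply', pow_succ, mul_inv, mul_comm, mul_smul]
    exact inv_smul_mem_aggKP (hsingle l) ih (fun j => mul_nonneg (by positivity) (hx0 j))

end Aggregation

theorem dotp_le_of_mem_convexHull {n : ℕ} {c : Fin n → ℝ} {S : Set (Fin n → ℝ)} {z : ℝ}
    (h : ∀ y ∈ S, dotp c y ≤ z) {x : Fin n → ℝ} (hx : x ∈ convexHull ℝ S) : dotp c x ≤ z :=
  convexHull_min h (convex_halfSpace_le ⟨dotProduct_add c, fun a x => dotProduct_smul a c x⟩ z) hx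

theorem stmt4_general {n m : ℕ} (A : Matrix (Fin m) (Fin n) ℝ) (b : Fin m → ℝ)
    (hAb : ∀ i j, A i j ≤ b i)
    (k : ℕ)
    (c : Fin n → ℝ)
    (zLP zI : ℝ)
    (hLP : IsLUB {r | ∃ x ∈ packLP A b, r = dotp c x} zLP)
    (hI : IsLUB {r | ∃ x ∈ packLP A b, isIntPt x ∧ r = dotp c x} zI)
    (hzI : 0 < zI)
    (l : ℕ)
    (hconv : (aggKP k)^[l] (packLP A b)
      = convexHull ℝ {x | x ∈ packLP A b ∧ isIntPt x}) :
    ⌈Real.logb 2 (zLP / zI) / Real.logb 2 (k + 1)⌉ ≤ (l : ℤ) := by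
  have hbound : ∀ x ∈ packLP A b, dotp c x ≤ ((k : ℝ) + 1) ^ l * zI := by
    intro x hx
    have hmem := inv_pow_smul_mem_iterate_aggKP (k := k)
      (fun j => (single_mem_packLPInt (hAb · j)).1) hx hx.1 l
    rw [hconv] at hmem
    have hle := dotp_le_of_mem_convexHull (fun y hy => hI.1 ⟨y, hy.1, hy.2, rfl⟩) hmem
    rwa [dotp_eq_dotProduct, dotProduct_smul, smul_eq_mul, inv_mul_le_iff₀ (by positivity)]
      at hle
  have hzLP : zLP ≤ ((k : ℝ) + 1) ^ l * zI := hLP.2 (by rintro _ ⟨x, hx, rfl⟩; exact hbound x hx)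
  have hzIzLP : zI ≤ zLP := hI.2 (by rintro _ ⟨x, hx, -, rfl⟩; exact hLP.1 ⟨x, hx, rfl⟩)
  have hlog : Real.logb 2 (zLP / zI) ≤ l * Real.logb 2 (k + 1) := by
    rw [← Real.logb_pow]
    exact Real.logb_le_logb_of_le one_lt_two (div_pos (hzI.trans_le hzIzLP) hzI)
      ((div_le_iff₀ hzI).2 hzLP)
  rw [Int.ceil_le, Int.cast_natCast]
  exact div_le_of_le_mul₀ (Real.logb_nonneg one_lt_two (by simp)) (Nat.cast_nonneg l) hlog

/-- For a packing polyhedron `Q = {x ≥ 0 : Ax ≤ b}` with `A i j ≤ b i`,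
any number `ℓ ≥ 1` of rounds of the `k`-aggregation closure reaching the integer hull
satisfies `ℓ ≥ ⌈log₂(z^LP/z^I) / log₂(k+1)⌉`. -/
theorem stmt4 {n m : ℕ} (A : Matrix (Fin m) (Fin n) ℝ) (b : Fin m → ℝ)
    (hA : ∀ i j, 0 ≤ A i j) (hb : ∀ i, 0 ≤ b i)
    (hAq : ∀ i j, ∃ q : ℚ, A i j = (q : ℝ)) (hbq : ∀ i, ∃ q : ℚ, b i = (q : ℝ))
    (hAb : ∀ i j, A i j ≤ b i)
    (k : ℕ) (hk : 1 ≤ k)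
    (c : Fin n → ℝ) (hc : ∀ j, 0 ≤ c j)
    (zLP zI : ℝ)
    (hLP : IsLUB {r | ∃ x ∈ packLP A b, r = dotp c x} zLP)
    (hI : IsLUB {r | ∃ x ∈ packLP A b, isIntPt x ∧ r = dotp c x} zI)
    (hzI : 0 < zI)
    (l : ℕ) (hl : 1 ≤ l)
    (hconv : (aggKP k)^[l] (packLP A b)
      = convexHull ℝ {x | x ∈ packLP A b ∧ isIntPt x}) :
    ⌈Real.logb 2 (zLP / zI) / Real.logb 2 (k + 1)⌉ ≤ (l : ℤ) :=
  stmt4_general A b hAb k c zLP zI hLP hI hzI l hconv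
end

section
/- Let U ⊇ V be two packing sets in ℝ^n and let α ≥ 1. Then U is an α-approximation of V (i.e., sup{cᵀx : x ∈ U} ≤ α·sup{cᵀx : x ∈ V} for every c ∈ ℝ^n with c ≥ 0) if and only if U ⊆ αV, where αV = {αv : v ∈ V}. -/
open Finset Pointwise

/-- A packing set in `ℝ^n`: a set of the form `{x ≥ 0 : aᵢᵀ x ≤ bᵢ ∀ i ∈ I}` with all the
data nonnegative, where `I` is an arbitrary index set. -/
def IsPackingSet {n : ℕ} (Q : Set (Fin n → ℝ)) : Prop :=
  ∃ (ι : Type) (a : ι → Fin n → ℝ) (β : ι → ℝ),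
    (∀ i j, 0 ≤ a i j) ∧ (∀ i, 0 ≤ β i) ∧
    Q = {x | (∀ j, 0 ≤ x j) ∧ ∀ i, dotp (a i) x ≤ β i}

/-! Testing the approximation inequality on the constraint vectors `aᵢ ≥ 0` of `V` shows that
`aᵢ x ≤ α βᵢ` for every `x ∈ U`, so `α⁻¹ x ∈ V` since `U` lies in the nonnegative orthant.
Conversely, `cᵀ(α v) = α cᵀv`, so `U ⊆ α • V` bounds every supremum over `U` by `α` times the
one over `V`. -/

lemma dotp_smul_s8 {n : ℕ} (c x : Fin n → ℝ) (t : ℝ) : dotp c (t • x) = t * dotp c x := by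
  simp only [dotp, Pi.smul_apply, smul_eq_mul, Finset.mul_sum]
  exact Finset.sum_congr rfl fun j _ => by ring

section supVal

variable {n : ℕ} {c : Fin n → ℝ} {S : Set (Fin n → ℝ)}

lemma le_supVal {x : Fin n → ℝ} (hx : x ∈ S) : ((dotp c x : ℝ) : EReal) ≤ supVal c S :=
  le_iSup₂ (f := fun y (_ : y ∈ S) => ((dotp c y : ℝ) : EReal)) x hx

lemma supVal_le {r : EReal} (h : ∀ x ∈ S, ((dotp c x : ℝ) : EReal) ≤ r) : supVal c S ≤ r :=
  iSup₂_le h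

lemma supVal_le_mul_of_subset_smul {U V : Set (Fin n → ℝ)} {α : ℝ} (hα : 0 ≤ α)
    (h : U ⊆ α • V) (c : Fin n → ℝ) : supVal c U ≤ ((α : ℝ) : EReal) * supVal c V := by
  refine supVal_le fun x hx => ?_
  obtain ⟨v, hv, rfl⟩ := h hx
  rw [dotp_smul_s8, EReal.coe_mul]
  exact mul_le_mul_of_nonneg_left (le_supVal hv) (EReal.coe_nonneg.mpr hα)

end supVal

lemma IsPackingSet.nonneg {n : ℕ} {Q : Set (Fin n → ℝ)} (hQ : IsPackingSet Q) {x : Fin n → ℝ}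
    (hx : x ∈ Q) (j : Fin n) : 0 ≤ x j := by
  obtain ⟨ι, a, β, -, -, rfl⟩ := hQ
  exact hx.1 j

lemma mem_smul_polyhedron {n : ℕ} {ι : Type*} (a : ι → Fin n → ℝ) (β : ι → ℝ) {α : ℝ}
    (hα : 0 < α) {x : Fin n → ℝ} (hx : ∀ j, 0 ≤ x j) (h : ∀ i, dotp (a i) x ≤ α * β i) :
    x ∈ α • {y | (∀ j, 0 ≤ y j) ∧ ∀ i, dotp (a i) y ≤ β i} := by
  rw [Set.mem_smul_set_iff_inv_smul_mem₀ hα.ne']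
  refine ⟨fun j => mul_nonneg (inv_nonneg.mpr hα.le) (hx j), fun i => ?_⟩
  rw [dotp_smul_s8, inv_mul_le_iff₀ hα]
  exact h i

lemma subset_smul_of_supVal_le {n : ℕ} {U V : Set (Fin n → ℝ)} (hU : IsPackingSet U)
    (hV : IsPackingSet V) {α : ℝ} (hα : 0 < α)
    (h : ∀ c : Fin n → ℝ, (∀ j, 0 ≤ c j) → supVal c U ≤ ((α : ℝ) : EReal) * supVal c V) :
    U ⊆ α • V := by
  obtain ⟨ι, a, β, ha, -, rfl⟩ := hV
  intro x hx
  refine mem_smul_polyhedron a β hα (hU.nonneg hx) fun i => ?_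
  have hrow : supVal (a i) {y | (∀ j, 0 ≤ y j) ∧ ∀ i, dotp (a i) y ≤ β i} ≤ β i :=
    supVal_le fun y hy => EReal.coe_le_coe_iff.mpr (hy.2 i)
  have : ((dotp (a i) x : ℝ) : EReal) ≤ ((α * β i : ℝ) : EReal) :=
    calc ((dotp (a i) x : ℝ) : EReal)
        ≤ supVal (a i) U := le_supVal hx
      _ ≤ ((α : ℝ) : EReal) * supVal (a i) _ := h (a i) (ha i)
      _ ≤ ((α : ℝ) : EReal) * ((β i : ℝ) : EReal) :=
          mul_le_mul_of_nonneg_left hrow (EReal.coe_nonneg.mpr hα.le)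
      _ = ((α * β i : ℝ) : EReal) := (EReal.coe_mul α (β i)).symm
  exact EReal.coe_le_coe_iff.mp this

theorem stmt8_general {n : ℕ} (U V : Set (Fin n → ℝ)) (hU : IsPackingSet U) (hV : IsPackingSet V)
    (α : ℝ) (hα : 1 ≤ α) :
    (∀ c : Fin n → ℝ, (∀ j, 0 ≤ c j) → supVal c U ≤ ((α : ℝ) : EReal) * supVal c V)
      ↔ U ⊆ α • V := by
  have hα0 : 0 < α := zero_lt_one.trans_le hα
  exact ⟨subset_smul_of_supVal_le hU hV hα0,
    fun h c _ => supVal_le_mul_of_subset_smul hα0.le h c⟩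

/-- For packing sets `U ⊇ V` and `α ≥ 1`: `U` is an `α`-approximation of
`V` (i.e. `sup{cᵀx : x ∈ U} ≤ α · sup{cᵀx : x ∈ V}` for all `c ≥ 0`) iff `U ⊆ α • V`. -/
theorem stmt8 {n : ℕ} (U V : Set (Fin n → ℝ)) (hU : IsPackingSet U) (hV : IsPackingSet V)
    (hVU : V ⊆ U) (α : ℝ) (hα : 1 ≤ α) :
    (∀ c : Fin n → ℝ, (∀ j, 0 ≤ c j) → supVal c U ≤ ((α : ℝ) : EReal) * supVal c V)
      ↔ U ⊆ α • V :=
  stmt8_general U V hU hV α hα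
end

section
/- Let Q = {x ∈ ℝ^n : x ≥ 0, Ax ≤ b} be a packing polyhedron, let S = {j ∈ [n] : A_{ij} > b_i for some i ∈ [m]}, and let LP*(Q) = {x ∈ Q : x_j = 0 for all j ∈ S}. Then LP*(Q) ⊆ 2·𝒜(Q), where 2·𝒜(Q) = {2y : y ∈ 𝒜(Q)}. In particular, LP*(Q) is a 2-approximation of the aggregation closure 𝒜(Q). -/
open Finset Pointwise

lemma half_mem_aggP {n m : ℕ} (A : Matrix (Fin m) (Fin n) ℝ) (b : Fin m → ℝ)
    (hA : ∀ i j, 0 ≤ A i j) (hb : ∀ i, 0 ≤ b i)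
    (x : Fin n → ℝ) (hx0 : ∀ j, 0 ≤ x j) (hxA : ∀ i, dotp (A i) x ≤ b i)
    (hxS : ∀ j, (∃ i, b i < A i j) → x j = 0) :
    (fun k => x k / 2) ∈ aggP A b := by
  classical
  rw [aggP, Set.mem_iInter]
  rintro ⟨lam, hlam⟩
  set c : Fin n → ℝ := fun j => ∑ i, lam i * A i j with hc
  set d : ℝ := ∑ i, lam i * b i with hd
  set K : Set (Fin n → ℝ) :=
    {y | (∀ j, 0 ≤ y j) ∧ isIntPt y ∧ dotp c y ≤ d} with hK
  show (fun k => x k / 2) ∈ convexHull ℝ K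
  have hc0 : ∀ j, 0 ≤ c j := fun j =>
    Finset.sum_nonneg fun i _ => mul_nonneg (hlam i) (hA i j)
  have hd0 : 0 ≤ d := Finset.sum_nonneg fun i _ => mul_nonneg (hlam i) (hb i)
  have hcx : dotp c x ≤ d := by
    have h1 : dotp c x = ∑ i, lam i * dotp (A i) x := by
      simp only [dotp, hc, Finset.sum_mul, Finset.mul_sum]
      rw [Finset.sum_comm]
      apply Finset.sum_congr rfl
      intro i _
      apply Finset.sum_congr rfl
      intro j _
      ring
    rw [h1]
    exact Finset.sum_le_sum fun i _ =>
      mul_le_mul_of_nonneg_left (hxA i) (hlam i)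
  have hsupp : ∀ j, 0 < x j → c j ≤ d := by
    intro j hj
    have hAb : ∀ i, A i j ≤ b i := by
      intro i
      by_contra h
      exact absurd (hxS j ⟨i, lt_of_not_ge h⟩) (ne_of_gt hj)
    exact Finset.sum_le_sum fun i _ =>
      mul_le_mul_of_nonneg_left (hAb i) (hlam i)
  -- the set of "big" coordinates
  set G : Finset (Fin n) := Finset.univ.filter (fun j => 0 < c j ∧ 0 < x j) with hG
  set v : Fin n → ℝ := fun k => (⌈x k / 2⌉ : ℝ) with hv
  set u : Fin n → ℝ := fun k => if c k = 0 then x k / 2 else 0 with hu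
  set mm : Fin n → ℝ := fun j => ((⌊d / c j⌋ : ℤ) : ℝ) with hmm
  set μ : Fin n → ℝ := fun j => x j / (2 * mm j) with hμ
  have hv0 : ∀ k, 0 ≤ v k := by
    intro k
    have h1 : (0 : ℤ) ≤ ⌈x k / 2⌉ := Int.ceil_nonneg (by linarith [hx0 k])
    simp only [hv]
    exact_mod_cast h1
  have hvle : ∀ k, x k / 2 ≤ v k := fun k => Int.le_ceil _
  have hGfact : ∀ j ∈ G, 0 < c j ∧ 0 < x j := by
    intro j hj
    simpa [hG] using hj
  have hmm1 : ∀ j ∈ G, (1 : ℝ) ≤ mm j := by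
    intro j hj
    obtain ⟨hcj, hxj⟩ := hGfact j hj
    have h1 : (1 : ℝ) ≤ d / c j := (one_le_div hcj).mpr (hsupp j hxj)
    have h2 : (1 : ℤ) ≤ ⌊d / c j⌋ := Int.le_floor.mpr (by exact_mod_cast h1)
    simp only [hmm]
    exact_mod_cast h2
  have hmmle : ∀ j ∈ G, c j * mm j ≤ d := by
    intro j hj
    obtain ⟨hcj, _⟩ := hGfact j hj
    have h1 : mm j ≤ d / c j := Int.floor_le _
    calc c j * mm j ≤ c j * (d / c j) :=
          mul_le_mul_of_nonneg_left h1 (le_of_lt hcj)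
      _ = d := by field_simp
  have hmm2 : ∀ j ∈ G, d ≤ c j * (2 * mm j) := by
    intro j hj
    obtain ⟨hcj, _⟩ := hGfact j hj
    have h1 : d / c j < mm j + 1 := Int.lt_floor_add_one _
    have h2 : (1 : ℝ) ≤ mm j := hmm1 j hj
    have h3 : d / c j ≤ 2 * mm j := by linarith
    calc d = c j * (d / c j) := by field_simp
      _ ≤ c j * (2 * mm j) := mul_le_mul_of_nonneg_left h3 (le_of_lt hcj)
  have hμ0 : ∀ j ∈ G, 0 ≤ μ j := by
    intro j hj
    have h2 : (1 : ℝ) ≤ mm j := hmm1 j hj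
    exact div_nonneg (hx0 j) (by linarith)
  have hsum : ∑ j ∈ G, μ j ≤ 1 := by
    rcases G.eq_empty_or_nonempty with h | ⟨j₀, hj₀⟩
    · simp [h]
    · obtain ⟨hcj₀, hxj₀⟩ := hGfact j₀ hj₀
      have hdpos : 0 < d := lt_of_lt_of_le hcj₀ (hsupp j₀ hxj₀)
      have step : ∀ j ∈ G, μ j ≤ c j * x j / d := by
        intro j hj
        obtain ⟨hcj, hxj⟩ := hGfact j hj
        have hden : 0 < 2 * mm j := by linarith [hmm1 j hj]
        rw [hμ, div_le_div_iff₀ hden hdpos]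
        have := hmm2 j hj
        nlinarith [hx0 j]
      calc ∑ j ∈ G, μ j ≤ ∑ j ∈ G, c j * x j / d := Finset.sum_le_sum step
        _ = (∑ j ∈ G, c j * x j) / d := by rw [Finset.sum_div]
        _ ≤ dotp c x / d := by
            apply (div_le_div_iff_of_pos_right hdpos).mpr
            exact Finset.sum_le_sum_of_subset_of_nonneg (Finset.subset_univ G)
              (fun j _ _ => mul_nonneg (hc0 j) (hx0 j))
        _ ≤ 1 := (div_le_one hdpos).mpr hcx
  -- membership of the "free" point u in the hull
  have hu_mem : u ∈ convexHull ℝ K := by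
    have hsub : Set.pi Set.univ
        (fun k => if c k = 0 then ({0, v k} : Set ℝ) else {0}) ⊆ K := by
      intro z hz
      have hz' : ∀ k, z k ∈ (if c k = 0 then ({0, v k} : Set ℝ) else {0}) :=
        fun k => hz k (Set.mem_univ k)
      refine ⟨?_, ?_, ?_⟩
      · intro k
        have := hz' k
        split_ifs at this with h
        · rcases this with h1 | h1 <;> rw [h1] <;>
            first
              | exact le_refl (0:ℝ)
              | exact hv0 k
        · rw [Set.mem_singleton_iff] at this; rw [this]
      · intro k
        have := hz' k
        split_ifs at this with h
        · rcases this with h1 | h1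
          · exact ⟨0, by rw [h1]; norm_num⟩
          · exact ⟨⌈x k / 2⌉, by rw [h1]⟩
        · rw [Set.mem_singleton_iff] at this; exact ⟨0, by rw [this]; norm_num⟩
      · have hz0 : ∀ k, c k * z k = 0 := by
          intro k
          have := hz' k
          split_ifs at this with h
          · rw [h, zero_mul]
          · rw [Set.mem_singleton_iff] at this; rw [this, mul_zero]
        calc dotp c z = ∑ k, c k * z k := rfl
          _ = 0 := Finset.sum_eq_zero fun k _ => hz0 k
          _ ≤ d := hd0
    refine convexHull_mono hsub (mem_convexHull_pi ?_)
    intro k _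
    by_cases h : c k = 0
    · rw [if_pos h, convexHull_pair, segment_eq_Icc (le_trans (by linarith [hx0 k]) (hvle k))]
      have huk : u k = x k / 2 := by simp only [hu]; rw [if_pos h]
      rw [huk]
      exact ⟨by linarith [hx0 k], hvle k⟩
    · rw [if_neg h, convexHull_singleton]
      have huk : u k = 0 := by simp only [hu]; rw [if_neg h]
      rw [huk]; rfl
  -- membership of the "spike" points in the hull
  set p : Fin n → (Fin n → ℝ) := fun j => Function.update u j (mm j) with hp
  have hp_mem : ∀ j ∈ G, p j ∈ convexHull ℝ K := by
    intro j hj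
    obtain ⟨hcj, hxj⟩ := hGfact j hj
    have hsub : Set.pi Set.univ
        (fun k => if k = j then ({mm j} : Set ℝ) else
          if c k = 0 then ({0, v k} : Set ℝ) else {0}) ⊆ K := by
      intro z hz
      have hz' : ∀ k, z k ∈ (if k = j then ({mm j} : Set ℝ) else
          if c k = 0 then ({0, v k} : Set ℝ) else {0}) :=
        fun k => hz k (Set.mem_univ k)
      have hzj : z j = mm j := by
        have := hz' j; rw [if_pos rfl, Set.mem_singleton_iff] at this; exact this
      have hz0 : ∀ k, k ≠ j → c k * z k = 0 := by
        intro k hk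
        have := hz' k
        rw [if_neg hk] at this
        split_ifs at this with h
        · rw [h, zero_mul]
        · rw [Set.mem_singleton_iff] at this; rw [this, mul_zero]
      refine ⟨?_, ?_, ?_⟩
      · intro k
        by_cases hk : k = j
        · rw [hk, hzj]; linarith [hmm1 j hj]
        · have := hz' k
          rw [if_neg hk] at this
          split_ifs at this with h
          · rcases this with h1 | h1 <;> rw [h1] <;>
              first
                | exact le_refl (0:ℝ)
                | exact hv0 k
          · rw [Set.mem_singleton_iff] at this; rw [this]
      · intro k
        by_cases hk : k = j
        · exact ⟨⌊d / c j⌋, by rw [hk, hzj]⟩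
        · have := hz' k
          rw [if_neg hk] at this
          split_ifs at this with h
          · rcases this with h1 | h1
            · exact ⟨0, by rw [h1]; norm_num⟩
            · exact ⟨⌈x k / 2⌉, by rw [h1]⟩
          · rw [Set.mem_singleton_iff] at this; exact ⟨0, by rw [this]; norm_num⟩
      · calc dotp c z = ∑ k, c k * z k := rfl
          _ = c j * z j := Finset.sum_eq_single j (fun k _ hk => hz0 k hk)
              (fun h => absurd (Finset.mem_univ j) h)
          _ = c j * mm j := by rw [hzj]
          _ ≤ d := hmmle j hj
    refine convexHull_mono hsub (mem_convexHull_pi ?_)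
    intro k _
    by_cases hk : k = j
    · rw [if_pos hk, convexHull_singleton, hk]
      show p j j ∈ _
      simp only [hp]
      rw [Function.update_self]
      rfl
    · rw [if_neg hk]
      have hpk : p j k = u k := by
        simp only [hp]
        rw [Function.update_of_ne hk]
      rw [hpk]
      by_cases h : c k = 0
      · rw [if_pos h, convexHull_pair,
          segment_eq_Icc (le_trans (by linarith [hx0 k]) (hvle k))]
        have huk : u k = x k / 2 := by simp only [hu]; rw [if_pos h]
        rw [huk]
        exact ⟨by linarith [hx0 k], hvle k⟩
      · rw [if_neg h, convexHull_singleton]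
        have huk : u k = 0 := by simp only [hu]; rw [if_neg h]
        rw [huk]; rfl
  -- assemble the convex combination
  set μ0 : ℝ := 1 - ∑ j ∈ G, μ j with hμ0def
  set t : Finset (Option (Fin n)) := insert none (G.image some) with ht
  set w : Option (Fin n) → ℝ := fun o => o.elim μ0 μ with hw
  set zz : Option (Fin n) → (Fin n → ℝ) := fun o => o.elim u p with hzz
  have hnone : (none : Option (Fin n)) ∉ G.image some := by simp
  have hwsum : ∑ o ∈ t, w o = 1 := by
    rw [ht, Finset.sum_insert hnone,
      Finset.sum_image (fun a _ b _ h => Option.some_injective _ h)]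
    simp only [hw, Option.elim]
    rw [hμ0def]; ring
  have hkey := (convex_convexHull ℝ K).sum_mem (t := t) (w := w) (z := zz)
    ?_ hwsum ?_
  · have heq : ∑ o ∈ t, w o • zz o = fun k => x k / 2 := by
      funext k
      rw [ht, Finset.sum_insert hnone,
        Finset.sum_image (fun a _ b _ h => Option.some_injective _ h)]
      simp only [hw, hzz, Option.elim, Pi.add_apply, Pi.smul_apply,
        Finset.sum_apply, smul_eq_mul]
      by_cases hkG : k ∈ G
      · obtain ⟨hck, hxk⟩ := hGfact k hkG
        have huk : u k = 0 := by
          simp only [hu]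
          rw [if_neg (ne_of_gt hck)]
        have hterm : ∀ j ∈ G, μ j * p j k = if j = k then μ k * mm k else 0 := by
          intro j hj
          by_cases hjk : j = k
          · rw [if_pos hjk, hjk]
            congr 1
            simp only [hp]
            rw [Function.update_self]
          · rw [if_neg hjk]
            have hkj : k ≠ j := fun h => hjk h.symm
            simp only [hp]
            rw [Function.update_of_ne hkj, huk, mul_zero]
        rw [Finset.sum_congr rfl hterm, Finset.sum_ite_eq' G k (fun _ => μ k * mm k),
          if_pos hkG, huk, mul_zero, zero_add]
        have hmmne : mm k ≠ 0 := by
          have := hmm1 k hkG; intro h; rw [h] at this; linarith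
        rw [hμ]
        field_simp
      · have hpk : ∀ j ∈ G, p j k = u k := by
          intro j hj
          have hkj : k ≠ j := fun h => hkG (h ▸ hj)
          simp only [hp]
          rw [Function.update_of_ne hkj]
        have huk : u k = x k / 2 := by
          by_cases h : c k = 0
          · simp only [hu]; rw [if_pos h]
          · have hck : 0 < c k := lt_of_le_of_ne (hc0 k) (Ne.symm h)
            have hxk : x k = 0 := by
              by_contra hxk
              exact hkG (by rw [hG]; simp [hck, lt_of_le_of_ne (hx0 k) (Ne.symm hxk)])
            simp only [hu]
            rw [if_neg h, hxk]
            norm_num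
        rw [Finset.sum_congr rfl (fun j hj => by rw [hpk j hj])]
        rw [← Finset.sum_mul, huk, hμ0def]
        ring
    rw [heq] at hkey
    exact hkey
  · rintro (_ | j) hi
    · show (0 : ℝ) ≤ μ0
      rw [hμ0def]; linarith [hsum]
    · exact hμ0 j (by simpa [ht] using hi)
  · rintro (_ | j) hi
    · exact hu_mem
    · exact hp_mem j (by simpa [ht] using hi)

/-- For a packing polyhedron `Q = {x ≥ 0 : Ax ≤ b}` and the
pre-processed LP `LP*(Q)`, one has `LP*(Q) ⊆ 2 · 𝒜(Q)`; in particular `LP*(Q)` is a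
2-approximation of the aggregation closure. -/
theorem stmt11 {n m : ℕ} (A : Matrix (Fin m) (Fin n) ℝ) (b : Fin m → ℝ)
    (hA : ∀ i j, 0 ≤ A i j) (hb : ∀ i, 0 ≤ b i)
    (hAq : ∀ i j, ∃ q : ℚ, A i j = (q : ℝ)) (hbq : ∀ i, ∃ q : ℚ, b i = (q : ℝ)) :
    {x | x ∈ packLP A b ∧ ∀ j, (∃ i, b i < A i j) → x j = 0} ⊆ (2 : ℝ) • aggP A b ∧
    ∀ c : Fin n → ℝ, (∀ j, 0 ≤ c j) →
      supVal c {x | x ∈ packLP A b ∧ ∀ j, (∃ i, b i < A i j) → x j = 0}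
        ≤ 2 * supVal c (aggP A b) := by
  constructor
  · intro x hx
    obtain ⟨⟨hx0, hxA⟩, hxS⟩ := hx
    refine Set.mem_smul_set.mpr ⟨fun k => x k / 2,
      half_mem_aggP A b hA hb x hx0 hxA hxS, ?_⟩
    funext k
    show (2 : ℝ) * (x k / 2) = x k
    ring
  · intro c _
    refine iSup₂_le fun x hx => ?_
    obtain ⟨⟨hx0, hxA⟩, hxS⟩ := hx
    have hy := half_mem_aggP A b hA hb x hx0 hxA hxS
    have h2 : (2 : EReal) = ((2 : ℝ) : EReal) := by norm_cast
    have h1 : ((dotp c x : ℝ) : EReal)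
        = (2 : EReal) * ((dotp c (fun k => x k / 2) : ℝ) : EReal) := by
      rw [h2, ← EReal.coe_mul]
      norm_cast
      simp only [dotp, Finset.mul_sum]
      apply Finset.sum_congr rfl
      intro j _
      ring
    rw [h1]
    refine mul_le_mul_of_nonneg_left ?_ (by rw [h2]; exact_mod_cast (by norm_num : (0:ℝ) ≤ 2))
    exact le_iSup₂ (f := fun y (_ : y ∈ aggP A b) => ((dotp c y : ℝ) : EReal)) _ hy
end

section
/- Let a ∈ ℝ^n be nonnegative, b₀ ≥ 0, and let P¹ = {x ∈ ℝ^n : x ≥ 0, aᵀx ≤ b₀}. Let S ⊆ [n] be any set with S ⊇ {j : a_j > b₀}, and let P² = {x ∈ P¹ : x_j = 0 for all j ∈ S}. Then P² ⊆ 2·conv(P¹ ∩ ℤ^n), where 2·C = {2y : y ∈ C}. -/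
open Finset Pointwise

/-- For a single-constraint packing polyhedron
`P¹ = {x ≥ 0 : aᵀx ≤ b₀}` and any `S ⊇ {j : a_j > b₀}`, the set
`P² = {x ∈ P¹ : x_j = 0 ∀ j ∈ S}` satisfies `P² ⊆ 2·conv(P¹ ∩ ℤ^n)`. -/
theorem stmt12 {n : ℕ} (a : Fin n → ℝ) (b0 : ℝ) (ha : ∀ j, 0 ≤ a j) (hb0 : 0 ≤ b0)
    (S : Set (Fin n)) (hS : ∀ j, b0 < a j → j ∈ S) :
    {x | (∀ j, 0 ≤ x j) ∧ dotp a x ≤ b0 ∧ ∀ j ∈ S, x j = 0}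
      ⊆ (2 : ℝ) • convexHull ℝ {x | (∀ j, 0 ≤ x j) ∧ dotp a x ≤ b0 ∧ isIntPt x} := by
  classical
  intro x hx
  obtain ⟨hx0, hxb, hxS⟩ := hx
  have key : ∀ j, 0 < x j → a j ≤ b0 := by
    intro j hj
    by_contra h
    exact hj.ne' (hxS j (hS j (lt_of_not_ge h)))
  set A : Set (Fin n → ℝ) := {y | (∀ j, 0 ≤ y j) ∧ dotp a y ≤ b0 ∧ isIntPt y} with hA
  set T0 : Finset (Fin n) := Finset.univ.filter (fun j => 0 < x j ∧ a j = 0) with hT0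
  set T1 : Finset (Fin n) := Finset.univ.filter (fun j => 0 < x j ∧ 0 < a j) with hT1
  set s1 : ℝ := ∑ j ∈ T1, x j / (2 * (⌊b0 / a j⌋₊ : ℝ)) with hs1def
  -- facts about members of T1
  have hT1mem : ∀ j ∈ T1, 0 < x j ∧ 0 < a j ∧ a j ≤ b0 := by
    intro j hj
    rw [hT1, Finset.mem_filter] at hj
    exact ⟨hj.2.1, hj.2.2, key j hj.2.1⟩
  have hfl1 : ∀ j, 0 < a j → a j ≤ b0 → 1 ≤ ⌊b0 / a j⌋₊ := by
    intro j haj hab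
    exact Nat.le_floor (by rw [Nat.cast_one, le_div_iff₀ haj]; linarith)
  -- s1 < 1
  have hs1lt : s1 < 1 := by
    rcases Finset.eq_empty_or_nonempty T1 with hE | hNE
    · rw [hs1def, hE, Finset.sum_empty]; norm_num
    · obtain ⟨j0, hj0⟩ := hNE
      have hb0pos : 0 < b0 := lt_of_lt_of_le (hT1mem j0 hj0).2.1 (hT1mem j0 hj0).2.2
      have hstep : s1 < ∑ j ∈ T1, a j * x j / b0 := by
        rw [hs1def]
        apply Finset.sum_lt_sum_of_nonempty ⟨j0, hj0⟩
        intro j hj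
        obtain ⟨hxj, haj, hab⟩ := hT1mem j hj
        have hfl : (1 : ℝ) ≤ (⌊b0 / a j⌋₊ : ℝ) := by exact_mod_cast hfl1 j haj hab
        have h2 : b0 / a j < 2 * (⌊b0 / a j⌋₊ : ℝ) := by
          have := Nat.lt_floor_add_one (b0 / a j)
          linarith
        have hb : b0 < a j * (2 * (⌊b0 / a j⌋₊ : ℝ)) := by
          rw [div_lt_iff₀ haj] at h2; linarith [h2]
        rw [div_lt_div_iff₀ (by linarith) hb0pos]
        calc x j * b0 < x j * (a j * (2 * (⌊b0 / a j⌋₊ : ℝ))) := by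
              exact (mul_lt_mul_iff_right₀ hxj).2 hb
          _ = a j * x j * (2 * (⌊b0 / a j⌋₊ : ℝ)) := by ring
      have hsum : ∑ j ∈ T1, a j * x j / b0 ≤ 1 := by
        rw [← Finset.sum_div, div_le_one hb0pos]
        calc ∑ j ∈ T1, a j * x j ≤ ∑ j, a j * x j := by
              apply Finset.sum_le_sum_of_subset_of_nonneg (Finset.subset_univ _)
              intro j _ _
              exact mul_nonneg (ha j) (hx0 j)
          _ ≤ b0 := hxb
      linarith
  have hε : 0 < 1 - s1 := by linarith
  set X : ℝ := ∑ j ∈ T0, x j with hXdef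
  have hX0 : 0 ≤ X := Finset.sum_nonneg fun j _ => hx0 j
  set N : ℕ := ⌈X / (2 * (1 - s1))⌉₊ + 1 with hNdef
  have hN1 : 1 ≤ N := Nat.le_add_left 1 _
  have hNpos : (0 : ℝ) < (N : ℝ) := by exact_mod_cast Nat.lt_of_lt_of_le Nat.zero_lt_one hN1
  have hT0bound : X / (2 * (N : ℝ)) ≤ 1 - s1 := by
    rw [div_le_iff₀ (by positivity)]
    have h1 : X / (2 * (1 - s1)) ≤ (N : ℝ) := by
      calc X / (2 * (1 - s1)) ≤ (⌈X / (2 * (1 - s1))⌉₊ : ℝ) := Nat.le_ceil _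
        _ ≤ (N : ℝ) := by exact_mod_cast Nat.le_succ _
    rw [div_le_iff₀ (by positivity)] at h1
    linarith
  set m : Fin n → ℕ := fun j => if a j = 0 then N else ⌊b0 / a j⌋₊ with hm
  set lam : Fin n → ℝ := fun j => x j / (2 * (m j : ℝ)) with hlam
  have hlam0 : ∀ j, 0 ≤ lam j := fun j => div_nonneg (hx0 j) (by positivity)
  -- sum over univ equals sum over T0 ∪ T1
  have hdisj : Disjoint T0 T1 := by
    rw [Finset.disjoint_left]
    intro j hj0 hj1
    rw [hT0, Finset.mem_filter] at hj0
    rw [hT1, Finset.mem_filter] at hj1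
    exact absurd hj0.2.2 (ne_of_gt hj1.2.2)
  have hzero : ∀ j, j ∉ T0 ∪ T1 → lam j = 0 := by
    intro j hj
    rw [Finset.mem_union, hT0, hT1, Finset.mem_filter, Finset.mem_filter] at hj
    push_neg at hj
    have hxj : x j = 0 := by
      by_contra hc
      have hxp : 0 < x j := lt_of_le_of_ne (hx0 j) (Ne.symm hc)
      rcases (ha j).eq_or_lt with h | h
      · exact (hj.1 (Finset.mem_univ j) hxp) h.symm
      · linarith [hj.2 (Finset.mem_univ j) hxp]
    simp [hlam, hxj]
  have hsum_split : ∑ j, lam j = (∑ j ∈ T0, lam j) + ∑ j ∈ T1, lam j := by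
    rw [← Finset.sum_union hdisj]
    exact (Finset.sum_subset (Finset.subset_univ _) (fun j _ hj => hzero j hj)).symm
  have hsumT0 : ∑ j ∈ T0, lam j = X / (2 * (N : ℝ)) := by
    rw [hXdef, Finset.sum_div]
    apply Finset.sum_congr rfl
    intro j hj
    rw [hT0, Finset.mem_filter] at hj
    simp [hlam, hm, hj.2.2]
  have hsumT1 : ∑ j ∈ T1, lam j = s1 := by
    rw [hs1def]
    apply Finset.sum_congr rfl
    intro j hj
    rw [hT1, Finset.mem_filter] at hj
    simp [hlam, hm, ne_of_gt hj.2.2]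
  have hs_le : ∑ j, lam j ≤ 1 := by
    rw [hsum_split, hsumT0, hsumT1]
    linarith [hT0bound]
  -- the points
  set P : Option (Fin n) → (Fin n → ℝ) := fun o => match o with
    | none => 0
    | some j => fun k => if k = j then (m j : ℝ) else 0 with hP
  set W : Option (Fin n) → ℝ := fun o => match o with
    | none => 1 - ∑ j, lam j
    | some j => lam j with hW
  have hPA : ∀ o, P o ∈ A := by
    intro o
    match o with
    | none =>
      refine ⟨fun j => by simp [hP], ?_, fun j => ⟨0, by simp [hP]⟩⟩
      simp [dotp, hP, hb0]
    | some j =>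
      refine ⟨fun k => ?_, ?_, fun k => ⟨if k = j then (m j : ℤ) else 0, ?_⟩⟩
      · show (0:ℝ) ≤ if k = j then (m j : ℝ) else 0
        split <;> positivity
      · have hdp : dotp a (P (some j)) = a j * (m j : ℝ) := by
          simp only [dotp, hP]
          rw [Finset.sum_eq_single j]
          · simp
          · intro k _ hk; simp [hk]
          · intro hk; exact absurd (Finset.mem_univ j) hk
        rw [hdp]
        rcases (ha j).eq_or_lt with h | h
        · rw [← h]; simpa using hb0
        · have hmj : (m j : ℝ) ≤ b0 / a j := by
            rw [hm]
            simp only [ne_of_gt h, if_neg (ne_of_gt h).symm]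
            exact Nat.floor_le (by positivity)
          rw [mul_comm, ← le_div_iff₀ h]
          exact hmj
      · show (if k = j then ((m j : ℝ)) else 0) = _
        split <;> simp
  have hWsum : ∑ o : Option (Fin n), W o = 1 := by
    rw [Fintype.sum_option]
    simp [hW]
  have hW0 : ∀ o, 0 ≤ W o := by
    intro o
    match o with
    | none => simpa [hW] using hs_le
    | some j => exact hlam0 j
  have hmpos : ∀ k, 0 < x k → (0 : ℝ) < (m k : ℝ) := by
    intro k hk
    have : 1 ≤ m k := by
      show 1 ≤ if a k = 0 then N else ⌊b0 / a k⌋₊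
      split_ifs with h
      · exact hN1
      · exact hfl1 k (lt_of_le_of_ne (ha k) (Ne.symm h)) (key k hk)
    exact_mod_cast Nat.lt_of_lt_of_le Nat.zero_lt_one this
  have hcm : ∑ o : Option (Fin n), W o • P o = (2⁻¹ : ℝ) • x := by
    funext k
    rw [Finset.sum_apply]
    rw [Fintype.sum_option (fun o => (W o • P o) k)]
    have h1 : (W none • P none) k = 0 := by simp [hP]
    have h2 : ∑ j, (W (some j) • P (some j)) k = lam k * (m k : ℝ) := by
      rw [Finset.sum_eq_single k]
      · simp [hW, hP]
      · intro j _ hj; simp [hW, hP, Ne.symm hj]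
      · intro hk; exact absurd (Finset.mem_univ k) hk
    rw [h1, h2, zero_add]
    rcases (hx0 k).eq_or_lt with h | h
    · simp [hlam, ← h, Pi.smul_apply]
    · have hmk : ((m k : ℝ)) ≠ 0 := ne_of_gt (hmpos k h)
      simp only [hlam, Pi.smul_apply, smul_eq_mul]
      field_simp
  rw [Set.mem_smul_set]
  refine ⟨(2⁻¹ : ℝ) • x, ?_, ?_⟩
  · rw [← hcm, ← Finset.centerMass_eq_of_sum_1 Finset.univ P hWsum]
    exact Finset.centerMass_mem_convexHull _ (fun o _ => hW0 o)
      (by rw [hWsum]; norm_num) (fun o _ => hPA o)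
  · rw [smul_smul]; norm_num
end

section
/- Let P = {x ∈ ℝ^n : 0 ≤ x ≤ u, Ax ≥ b} be a covering polyhedron with bounds and let j ∈ [n] be an index with u_j finite. Define Â to be the m×n matrix whose i-th row is A_i − A_{ij} e_jᵀ (i.e., A_i with its j-th entry replaced by 0), define b̂_i = b_i − A_{ij} u_j for each i ∈ [m], and let û equal u except û_j = +∞. Then P + cone(e_j) = {x ∈ ℝ^n : 0 ≤ x ≤ û, Ax ≥ b, Âx ≥ b̂}, where cone(e_j) = {t e_j : t ≥ 0} and e_j is the j-th standard basis vector. In particular, P + cone(e_j) is again a covering polyhedron with bounds. -/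
open Finset Pointwise

lemma dotp_add_single {n : ℕ} (c x : Fin n → ℝ) (j : Fin n) (t : ℝ) :
    dotp c (x + t • (Pi.single j 1 : Fin n → ℝ)) = dotp c x + t * c j := by
  simp only [dotp, Pi.add_apply, mul_add, Finset.sum_add_distrib]
  congr 1
  have h : ∀ j' ∈ Finset.univ, c j' * (t • (Pi.single j 1 : Fin n → ℝ)) j'
      = if j' = j then t * c j else 0 := by
    intro j' _
    rcases eq_or_ne j' j with h | h <;> simp [Pi.single_apply, h] <;> ring
  rw [Finset.sum_congr rfl h, Finset.sum_ite_eq' Finset.univ j (fun _ => t * c j)]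
  simp

lemma dotp_update {n : ℕ} (c x : Fin n → ℝ) (j : Fin n) (v : ℝ) :
    dotp c (Function.update x j v) = dotp c x + c j * (v - x j) := by
  simp only [dotp, Function.update_apply]
  rw [Finset.sum_congr rfl (fun j' _ => show c j' * (if j' = j then v else x j')
      = c j' * x j' + (if j' = j then c j * (v - x j) else 0) by split <;> simp_all <;> ring),
    Finset.sum_add_distrib, Finset.sum_ite_eq' Finset.univ j]
  simp

lemma dotp_hat {n : ℕ} (c x : Fin n → ℝ) (j : Fin n) :
    dotp (fun j' => if j' = j then 0 else c j') x = dotp c x - c j * x j := by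
  simp only [dotp]
  rw [Finset.sum_congr rfl (fun j' _ => show (if j' = j then 0 else c j') * x j'
      = c j' * x j' - (if j' = j then c j * x j else 0) by split <;> simp_all),
    Finset.sum_sub_distrib, Finset.sum_ite_eq' Finset.univ j]
  simp

/-- Let `P = {x : 0 ≤ x ≤ u, Ax ≥ b}` be a covering polyhedron with
bounds (bounds imposed on coordinates in `J`) and `j ∈ J` (so `u j` is finite).  With
`Â i = A i` with its `j`-th entry replaced by `0` and `b̂ i = b i - A i j * u j`, and the
bound on coordinate `j` dropped,
`P + cone(e_j) = {x ≥ 0 : x_{j'} ≤ u_{j'} (j' ∈ J \ {j}), Ax ≥ b, Âx ≥ b̂}`.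
In particular `P + cone(e_j)` is again a covering polyhedron with bounds. -/
theorem stmt14 {n m : ℕ} (A : Matrix (Fin m) (Fin n) ℝ) (b : Fin m → ℝ)
    (J : Finset (Fin n)) (u : Fin n → ℝ)
    (hA : ∀ i j, 0 ≤ A i j) (hb : ∀ i, 0 ≤ b i)
    (hAq : ∀ i j, ∃ q : ℚ, A i j = (q : ℝ)) (hbq : ∀ i, ∃ q : ℚ, b i = (q : ℝ))
    (hu : ∀ j ∈ J, ∃ z : ℕ, u j = (z : ℝ))
    (j : Fin n) (hj : j ∈ J) :
    coverLP A b J u + {y : Fin n → ℝ | ∃ t : ℝ, 0 ≤ t ∧ y = t • (Pi.single j 1 : Fin n → ℝ)}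
      = {x | (∀ j', 0 ≤ x j') ∧ (∀ j' ∈ J.erase j, x j' ≤ u j') ∧
          (∀ i, b i ≤ dotp (A i) x) ∧
          (∀ i, b i - A i j * u j
            ≤ dotp (fun j' => if j' = j then 0 else A i j') x)} ∧
    ∃ (m' : ℕ) (A' : Matrix (Fin m') (Fin n) ℝ) (b' : Fin m' → ℝ),
      (∀ i j', 0 ≤ A' i j') ∧ (∀ i, 0 ≤ b' i) ∧
      (∀ i j', ∃ q : ℚ, A' i j' = (q : ℝ)) ∧ (∀ i, ∃ q : ℚ, b' i = (q : ℝ)) ∧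
      coverLP A b J u + {y : Fin n → ℝ | ∃ t : ℝ, 0 ≤ t ∧ y = t • (Pi.single j 1 : Fin n → ℝ)}
        = coverLP A' b' (J.erase j) u := by
  obtain ⟨z, hz⟩ := hu j hj
  have huj : (0:ℝ) ≤ u j := by rw [hz]; positivity
  have hset : coverLP A b J u
      + {y : Fin n → ℝ | ∃ t : ℝ, 0 ≤ t ∧ y = t • (Pi.single j 1 : Fin n → ℝ)}
      = {x | (∀ j', 0 ≤ x j') ∧ (∀ j' ∈ J.erase j, x j' ≤ u j') ∧
          (∀ i, b i ≤ dotp (A i) x) ∧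
          (∀ i, b i - A i j * u j
            ≤ dotp (fun j' => if j' = j then 0 else A i j') x)} := by
    ext x
    constructor
    · rintro ⟨p, ⟨hp0, hpu, hpA⟩, y, ⟨t, ht, rfl⟩, rfl⟩
      refine ⟨?_, ?_, ?_, ?_⟩
      · intro j'
        have : (0:ℝ) ≤ t * (Pi.single j 1 : Fin n → ℝ) j' := by
          rcases eq_or_ne j' j with h | h <;> simp [Pi.single_apply, h, ht]
        simpa using add_nonneg (hp0 j') this
      · intro j' hj'
        obtain ⟨hne, hJ⟩ := Finset.mem_erase.mp hj'
        simpa [Pi.single_apply, hne] using hpu j' hJ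
      · intro i
        rw [dotp_add_single]
        have := mul_nonneg ht (hA i j)
        linarith [hpA i]
      · intro i
        rw [dotp_hat, dotp_add_single]
        have h1 := hpA i
        have h2 : A i j * p j ≤ A i j * u j := mul_le_mul_of_nonneg_left (hpu j hj) (hA i j)
        simp only [Pi.add_apply, Pi.smul_apply, smul_eq_mul, Pi.single_eq_same, mul_one]
        linarith
    · rintro ⟨hx0, hxu, hxA, hxAh⟩
      refine ⟨Function.update x j (min (x j) (u j)), ⟨?_, ?_, ?_⟩,
        (x j - min (x j) (u j)) • (Pi.single j 1 : Fin n → ℝ),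
        ⟨x j - min (x j) (u j), sub_nonneg.mpr (min_le_left _ _), rfl⟩, ?_⟩
      · intro j'
        rcases eq_or_ne j' j with h | h
        · subst h; simpa using le_min (hx0 j') huj
        · simpa [Function.update_apply, h] using hx0 j'
      · intro j' hj'
        rcases eq_or_ne j' j with h | h
        · subst h; simpa using min_le_right _ _
        · simpa [Function.update_apply, h] using hxu j' (Finset.mem_erase.mpr ⟨h, hj'⟩)
      · intro i
        rw [dotp_update]
        rcases le_total (x j) (u j) with h | h
        · rw [min_eq_left h]; simpa using hxA i
        · rw [min_eq_right h]
          have := hxAh i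
          rw [dotp_hat] at this
          linarith
      · funext j'
        rcases eq_or_ne j' j with h | h
        · subst h
          simp only [Pi.add_apply, Function.update_self, Pi.smul_apply, smul_eq_mul,
            Pi.single_eq_same, mul_one]
          ring
        · simp [Function.update_apply, Pi.single_apply, h]
  refine ⟨hset, m + m,
    Fin.addCases (fun i => A i) (fun i j' => if j' = j then 0 else A i j'),
    Fin.addCases b (fun i => max (b i - A i j * u j) 0), ?_, ?_, ?_, ?_, ?_⟩
  · intro i j'
    refine Fin.addCases (fun i => ?_) (fun i => ?_) i
    · simpa using hA i j'
    · simp only [Fin.addCases_right]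
      split
      · exact le_refl 0
      · exact hA i j'
  · intro i
    refine Fin.addCases (fun i => ?_) (fun i => ?_) i
    · simpa using hb i
    · simp only [Fin.addCases_right]
      exact le_max_right _ _
  · intro i j'
    refine Fin.addCases (fun i => ?_) (fun i => ?_) i
    · simpa using hAq i j'
    · simp only [Fin.addCases_right]
      split
      · exact ⟨0, by simp⟩
      · exact hAq i j'
  · intro i
    refine Fin.addCases (fun i => ?_) (fun i => ?_) i
    · simpa using hbq i
    · obtain ⟨q, hq⟩ := hbq i
      obtain ⟨q', hq'⟩ := hAq i j
      refine ⟨max (q - q' * (z : ℚ)) 0, ?_⟩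
      simp only [Fin.addCases_right]
      rw [hq, hq', hz]
      push_cast
      rfl
  · rw [hset]
    ext x
    simp only [coverLP, Set.mem_setOf_eq]
    constructor
    · rintro ⟨h0, hu', hAx, hAhx⟩
      refine ⟨h0, hu', fun i => ?_⟩
      refine Fin.addCases (fun i => ?_) (fun i => ?_) i
      · simpa using hAx i
      · simp only [Fin.addCases_left, Fin.addCases_right]
        refine max_le (hAhx i) (Finset.sum_nonneg fun j' _ => ?_)
        dsimp only
        refine mul_nonneg ?_ (h0 j')
        split
        · exact le_refl 0
        · exact hA i j'
    · rintro ⟨h0, hu', hAll⟩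
      refine ⟨h0, hu', fun i => ?_, fun i => ?_⟩
      · simpa using hAll (Fin.castAdd m i)
      · have := hAll (Fin.natAdd m i)
        simp only [Fin.addCases_left, Fin.addCases_right] at this
        exact le_trans (le_max_left _ _) this
end
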